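/- arXiv:2009.14742 — 11 statements merged into one kernel-verified Lean document; each statement's English description precedes it below -/
import Mathlib

section
/- All log-convex functions f : (0,∞) → (0,∞) satisfying f(x+1) = x·f(x) for all x > 0 are of the form f(x) = c·Γ(x) for some constant c > 0. -/
open Real Set

theorem bohr_mollerup (f : ℝ → ℝ)
    (hpos : ∀ x, 0 < x → 0 < f x)
    (hlc : ConvexOn ℝ (Set.Ioi (0:ℝ)) (fun x => Real.log (f x)))
    (hfe : ∀ x, 0 < x → f (x + 1) = x * f x) :
    ∃ c : ℝ, 0 < c ∧ ∀ x, 0 < x → f x = c * Real.Gamma x := by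
  have h1 : 0 < f 1 := hpos 1 one_pos
  refine ⟨f 1, h1, ?_⟩
  set g : ℝ → ℝ := fun x => f x / f 1 with hg
  have hgeq : EqOn g Gamma (Ioi (0:ℝ)) := by
    apply Real.eq_Gamma_of_log_convex
    · have hc : ConvexOn ℝ (Ioi (0:ℝ)) (fun x => Real.log (f x) - Real.log (f 1)) :=
        hlc.sub (concaveOn_const _ (convex_Ioi 0))
      refine hc.congr fun x hx => ?_
      simp only [Function.comp_apply, hg]
      rw [Real.log_div (hpos x hx).ne' h1.ne']
    · intro y hy
      simp only [hg]
      rw [hfe y hy, mul_div_assoc]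
    · intro y hy
      exact div_pos (hpos y hy) h1
    · simp [hg, div_self h1.ne']
  intro x hx
  have := hgeq (mem_Ioi.mpr hx)
  simp only [hg] at this
  field_simp at this
  linarith [this]
end

section
/- For all x > 0 and all a with 0 ≤ a ≤ 1, one has (1 + a/x)^(a-1) ≤ Γ(x+a)/(Γ(x)·x^a) ≤ 1 (Wendel's inequality). -/
open Real

theorem wendel_inequality (x a : ℝ) (hx : 0 < x) (ha0 : 0 ≤ a) (ha1 : a ≤ 1) :
    (1 + a / x) ^ (a - 1) ≤ Real.Gamma (x + a) / (Real.Gamma x * x ^ a) ∧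
    Real.Gamma (x + a) / (Real.Gamma x * x ^ a) ≤ 1 := by
  have hGx : 0 < Real.Gamma x := Real.Gamma_pos_of_pos hx
  have hxa : 0 < x + a := by linarith
  have hGxa : 0 < Real.Gamma (x + a) := Real.Gamma_pos_of_pos hxa
  have hxp : (0:ℝ) < x ^ a := Real.rpow_pos_of_pos hx a
  have hden : 0 < Real.Gamma x * x ^ a := mul_pos hGx hxp
  rcases eq_or_lt_of_le ha0 with h0 | h0
  · subst h0
    simp [Real.rpow_natCast]
    norm_num [Real.rpow_zero, Real.one_rpow, div_self hGx.ne']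
  rcases eq_or_lt_of_le ha1 with h1 | h1
  · subst h1
    have hG1 : Real.Gamma (x + 1) = x * Real.Gamma x := Real.Gamma_add_one hx.ne'
    rw [hG1, sub_self, Real.rpow_zero, Real.rpow_one]
    have heq : x * Real.Gamma x / (Real.Gamma x * x) = 1 := by
      rw [mul_comm (Real.Gamma x) x, div_self (by positivity)]
    rw [heq]; exact ⟨le_rfl, le_rfl⟩
  have h1a : 0 < 1 - a := by linarith
  -- Upper bound: Γ(x+a) ≤ Γ(x)^(1-a) Γ(x+1)^a = Γ(x) x^a
  have hub : Real.Gamma (x + a) ≤ Real.Gamma x * x ^ a := by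
    have key := Real.Gamma_mul_add_mul_le_rpow_Gamma_mul_rpow_Gamma hx
      (by linarith : (0:ℝ) < x + 1) h1a h0 (by ring)
    have harg : (1 - a) * x + a * (x + 1) = x + a := by ring
    rw [harg, Real.Gamma_add_one hx.ne'] at key
    calc Real.Gamma (x + a) ≤ Real.Gamma x ^ (1 - a) * (x * Real.Gamma x) ^ a := key
      _ = Real.Gamma x * x ^ a := by
          rw [Real.mul_rpow hx.le hGx.le, ← mul_assoc,
            mul_comm (Real.Gamma x ^ (1-a)) (x ^ a), mul_assoc,
            ← Real.rpow_add hGx, sub_add_cancel, Real.rpow_one, mul_comm]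
  -- Lower bound: Γ(x+1) ≤ Γ(x+a)^a Γ(x+a+1)^(1-a) = Γ(x+a) (x+a)^(1-a)
  have hlb : x * Real.Gamma x ≤ Real.Gamma (x + a) * (x + a) ^ (1 - a) := by
    have key := Real.Gamma_mul_add_mul_le_rpow_Gamma_mul_rpow_Gamma hxa
      (by linarith : (0:ℝ) < x + a + 1) h0 h1a (by ring)
    have harg : a * (x + a) + (1 - a) * (x + a + 1) = x + 1 := by ring
    rw [harg, Real.Gamma_add_one hx.ne', Real.Gamma_add_one hxa.ne'] at key
    calc x * Real.Gamma x ≤ Real.Gamma (x+a) ^ a * ((x+a) * Real.Gamma (x+a)) ^ (1-a) := key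
      _ = Real.Gamma (x + a) * (x + a) ^ (1 - a) := by
          rw [Real.mul_rpow hxa.le hGxa.le, ← mul_assoc,
            mul_comm (Real.Gamma (x+a) ^ a) ((x+a) ^ (1-a)), mul_assoc,
            ← Real.rpow_add hGxa, add_sub_cancel, Real.rpow_one, mul_comm]
  constructor
  · rw [le_div_iff₀ hden]
    have h1ax : (1 + a / x) ^ (a - 1) = x ^ (1 - a) * (x + a) ^ (a - 1) := by
      rw [show (1 : ℝ) + a / x = (x + a) / x by field_simp,
        Real.div_rpow hxa.le hx.le, div_eq_mul_inv, ← Real.rpow_neg hx.le, neg_sub, mul_comm]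
    rw [h1ax]
    have hxap : 0 < (x + a) ^ (1 - a) := Real.rpow_pos_of_pos hxa _
    rw [show x ^ (1-a) * (x+a) ^ (a-1) * (Real.Gamma x * x ^ a)
        = (x ^ (1-a) * x ^ a) * Real.Gamma x * (x+a) ^ (a-1) by ring,
      ← Real.rpow_add hx, sub_add_cancel, Real.rpow_one]
    rw [show (a:ℝ) - 1 = -(1-a) by ring, Real.rpow_neg hxa.le,
      mul_inv_le_iff₀ hxap]
    linarith [hlb]
  · rw [div_le_one hden]; exact hub
end

section
/- For all x > 0 and all a ≥ 0, one has (1 + a/x)^(−|a−1|) ≤ Γ(x+a)/(Γ(x)·x^a) ≤ (1 + a/x)^(|a−1|). -/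
open Real

lemma wendel_core_upper_lt1 (x a : ℝ) (hx : 0 < x) (ha0 : 0 < a) (ha1 : a < 1) :
    Gamma (x + a) ≤ Gamma x * x ^ a := by
  have h := Gamma_mul_add_mul_le_rpow_Gamma_mul_rpow_Gamma hx (show (0:ℝ) < x + 1 by linarith)
    (show (0:ℝ) < 1 - a by linarith) ha0 (by ring)
  have harg : (1 - a) * x + a * (x + 1) = x + a := by ring
  rw [harg, Gamma_add_one hx.ne'] at h
  have hG := Gamma_pos_of_pos hx
  calc Gamma (x + a) ≤ Gamma x ^ (1 - a) * (x * Gamma x) ^ a := h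
    _ = Gamma x * x ^ a := by
        rw [mul_rpow hx.le hG.le, mul_comm (x ^ a), ← mul_assoc, ← rpow_add hG]
        norm_num

lemma wendel_core_lower_lt1 (x a : ℝ) (hx : 0 < x) (ha0 : 0 < a) (ha1 : a < 1) :
    x * Gamma x ≤ Gamma (x + a) * (x + a) ^ (1 - a) := by
  have hxa : (0:ℝ) < x + a := by linarith
  have h := Gamma_mul_add_mul_le_rpow_Gamma_mul_rpow_Gamma hxa
    (show (0:ℝ) < x + a + 1 by linarith) ha0 (show (0:ℝ) < 1 - a by linarith) (by ring)
  have harg : a * (x + a) + (1 - a) * (x + a + 1) = x + 1 := by ring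
  rw [harg, Gamma_add_one hx.ne', Gamma_add_one hxa.ne'] at h
  have hG := Gamma_pos_of_pos hxa
  calc x * Gamma x ≤ Gamma (x + a) ^ a * ((x + a) * Gamma (x + a)) ^ (1 - a) := h
    _ = Gamma (x + a) * (x + a) ^ (1 - a) := by
        rw [mul_rpow hxa.le hG.le, mul_comm ((x+a) ^ (1-a)), ← mul_assoc, ← rpow_add hG]
        norm_num

lemma wendel_core_lower_gt1 (x a : ℝ) (hx : 0 < x) (ha1 : 1 < a) :
    Gamma x * x ^ a ≤ Gamma (x + a) := by
  have ha0 : (0:ℝ) < a := by linarith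
  have hxa : (0:ℝ) < x + a := by linarith
  have hG := Gamma_pos_of_pos hx
  have hGa := Gamma_pos_of_pos hxa
  have h := Gamma_mul_add_mul_le_rpow_Gamma_mul_rpow_Gamma hx hxa
    (div_pos (by linarith : (0:ℝ) < a - 1) ha0) (by positivity : (0:ℝ) < 1/a)
    (by field_simp; ring)
  have harg : (a-1)/a * x + 1/a * (x + a) = x + 1 := by field_simp; ring
  rw [harg, Gamma_add_one hx.ne'] at h
  have h2 : (x * Gamma x) ^ a ≤ (Gamma x ^ ((a-1)/a) * Gamma (x+a) ^ (1/a)) ^ a :=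
    rpow_le_rpow (by positivity) h ha0.le
  have hr : (Gamma x ^ ((a-1)/a) * Gamma (x+a) ^ (1/a)) ^ a
      = Gamma x ^ (a-1) * Gamma (x+a) := by
    rw [mul_rpow (rpow_nonneg hG.le _) (rpow_nonneg hGa.le _),
      ← rpow_mul hG.le, ← rpow_mul hGa.le, div_mul_cancel₀ _ ha0.ne',
      one_div, inv_mul_cancel₀ ha0.ne', rpow_one]
  rw [hr, mul_rpow hx.le hG.le] at h2
  have key : Gamma x ^ a = Gamma x ^ (a - 1) * Gamma x := by
    rw [← rpow_add_one hG.ne' (a-1)]; ring_nf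
  have h3 : Gamma x ^ (a-1) * (Gamma x * x ^ a) ≤ Gamma x ^ (a-1) * Gamma (x+a) := by
    calc Gamma x ^ (a-1) * (Gamma x * x ^ a) = x ^ a * Gamma x ^ a := by rw [key]; ring
      _ ≤ Gamma x ^ (a-1) * Gamma (x+a) := h2
  exact le_of_mul_le_mul_left h3 (rpow_pos_of_pos hG _)

lemma wendel_core_upper_gt1 (x a : ℝ) (hx : 0 < x) (ha1 : 1 < a) :
    Gamma (x + a) ≤ x * Gamma x * (x + a) ^ (a - 1) := by
  have ha0 : (0:ℝ) < a := by linarith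
  have hxa : (0:ℝ) < x + a := by linarith
  have hG := Gamma_pos_of_pos hx
  have hGa := Gamma_pos_of_pos hxa
  have h := Gamma_mul_add_mul_le_rpow_Gamma_mul_rpow_Gamma
    (show (0:ℝ) < x + 1 by linarith) (show (0:ℝ) < x + a + 1 by linarith)
    (by positivity : (0:ℝ) < 1/a) (div_pos (by linarith : (0:ℝ) < a - 1) ha0)
    (by field_simp; ring)
  have harg : 1/a * (x + 1) + (a-1)/a * (x + a + 1) = x + a := by field_simp; ring
  rw [harg, Gamma_add_one hx.ne', Gamma_add_one hxa.ne'] at h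
  have h2 : Gamma (x+a) ^ a ≤ ((x * Gamma x) ^ (1/a) * ((x+a) * Gamma (x+a)) ^ ((a-1)/a)) ^ a :=
    rpow_le_rpow hGa.le h ha0.le
  have hr : ((x * Gamma x) ^ (1/a) * ((x+a) * Gamma (x+a)) ^ ((a-1)/a)) ^ a
      = x * Gamma x * ((x+a) * Gamma (x+a)) ^ (a-1) := by
    rw [mul_rpow (rpow_nonneg (by positivity) _) (rpow_nonneg (by positivity) _),
      ← rpow_mul (by positivity), ← rpow_mul (by positivity),
      one_div, inv_mul_cancel₀ ha0.ne', rpow_one, div_mul_cancel₀ _ ha0.ne']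
  rw [hr, mul_rpow hxa.le hGa.le] at h2
  have key : Gamma (x+a) ^ a = Gamma (x+a) ^ (a - 1) * Gamma (x+a) := by
    rw [← rpow_add_one hGa.ne' (a-1)]; ring_nf
  have h3 : Gamma (x+a) ^ (a-1) * Gamma (x+a)
      ≤ Gamma (x+a) ^ (a-1) * (x * Gamma x * (x+a) ^ (a-1)) := by
    calc Gamma (x+a) ^ (a-1) * Gamma (x+a) = Gamma (x+a) ^ a := key.symm
      _ ≤ x * Gamma x * ((x+a) ^ (a-1) * Gamma (x+a) ^ (a-1)) := h2
      _ = Gamma (x+a) ^ (a-1) * (x * Gamma x * (x+a) ^ (a-1)) := by ring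
  exact le_of_mul_le_mul_left h3 (rpow_pos_of_pos hGa _)

theorem wendel_inequality_symmetrized (x a : ℝ) (hx : 0 < x) (ha : 0 ≤ a) :
    (1 + a / x) ^ (-|a - 1|) ≤ Real.Gamma (x + a) / (Real.Gamma x * x ^ a) ∧
    Real.Gamma (x + a) / (Real.Gamma x * x ^ a) ≤ (1 + a / x) ^ |a - 1| := by
  have hG := Gamma_pos_of_pos hx
  have hxa : (0:ℝ) < x + a := by linarith
  have hGa := Gamma_pos_of_pos hxa
  have hxp : (0:ℝ) < x ^ a := rpow_pos_of_pos hx a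
  have hden : (0:ℝ) < Gamma x * x ^ a := by positivity
  have hbase : 1 + a / x = (x + a) / x := by field_simp
  have hbase1 : (1:ℝ) ≤ 1 + a / x := by
    have : 0 ≤ a / x := by positivity
    linarith
  have hxa1 : (0:ℝ) < x ^ (a-1) := rpow_pos_of_pos hx _
  have hx1 : x ^ a = x ^ (a-1) * x := by
    rw [← rpow_add_one hx.ne' (a-1)]; ring_nf
  rcases eq_or_lt_of_le ha with rfl | ha0
  · simp [hxa.ne', hG.ne']
  rcases lt_trichotomy a 1 with hlt | rfl | hgt
  · -- 0 < a < 1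
    rw [abs_of_neg (by linarith : a - 1 < 0), neg_neg]
    have hl := wendel_core_lower_lt1 x a hx ha0 hlt
    have hA : (x+a) ^ (a-1) * (x+a) ^ (1-a) = 1 := by
      rw [← rpow_add hxa]; norm_num
    have hD : (1 + a/x) ^ (a-1) * (Gamma x * x ^ a) = x * Gamma x * (x+a) ^ (a-1) := by
      rw [hbase, div_rpow hxa.le hx.le, hx1]
      field_simp
    constructor
    · rw [le_div_iff₀ hden, hD]
      calc x * Gamma x * (x+a) ^ (a-1)
          ≤ Gamma (x+a) * (x+a) ^ (1-a) * (x+a) ^ (a-1) :=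
            mul_le_mul_of_nonneg_right hl (rpow_pos_of_pos hxa _).le
        _ = Gamma (x+a) * ((x+a) ^ (a-1) * (x+a) ^ (1-a)) := by ring
        _ = Gamma (x+a) := by rw [hA, mul_one]
    · rw [div_le_iff₀ hden]
      calc Gamma (x+a) ≤ Gamma x * x ^ a := wendel_core_upper_lt1 x a hx ha0 hlt
        _ ≤ (1 + a/x) ^ (-(a-1)) * (Gamma x * x ^ a) := by
            nlinarith [one_le_rpow hbase1 (by linarith : (0:ℝ) ≤ -(a-1))]
  · simp [Gamma_add_one hx.ne', hG.ne', rpow_one, mul_comm, hx.ne']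
  · -- a > 1
    rw [abs_of_pos (by linarith : (0:ℝ) < a - 1)]
    constructor
    · rw [le_div_iff₀ hden]
      calc (1 + a/x) ^ (-(a-1)) * (Gamma x * x ^ a)
          ≤ 1 * (Gamma x * x ^ a) := by
            have := rpow_le_one_of_one_le_of_nonpos hbase1 (by linarith : -(a-1) ≤ 0)
            nlinarith
        _ = Gamma x * x ^ a := one_mul _
        _ ≤ Gamma (x+a) := wendel_core_lower_gt1 x a hx hgt
    · rw [div_le_iff₀ hden]
      have hD : (1 + a/x) ^ (a-1) * (Gamma x * x ^ a) = x * Gamma x * (x+a) ^ (a-1) := by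
        rw [hbase, div_rpow hxa.le hx.le, hx1]
        field_simp
      rw [hD]
      exact wendel_core_upper_gt1 x a hx hgt
end

section
/- For all x > 0, 1 ≤ Γ(x)/(√(2π)·e^(−x)·x^(x−1/2)) ≤ (1 + 1/x)^(1/2). -/
open Real Filter Topology

private noncomputable def dd (t : ℝ) : ℝ := (t + 1/2) * (Real.log (t+1) - Real.log t) - 1

private lemma pade_lower (t : ℝ) (ht : 0 ≤ t) : 2*t/(2+t) ≤ Real.log (1+t) := by
  have key : ∀ u : ℝ, 0 ≤ u →
      HasDerivAt (fun v => Real.log (1+v) - 2*v/(2+v)) (u^2/((1+u)*(2+u)^2)) u := by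
    intro u hu
    have h1 : HasDerivAt (fun v : ℝ => Real.log (1+v)) (1/(1+u)) u := by
      have := ((hasDerivAt_id u).const_add 1).log (by positivity)
      simpa using this
    have h2 : HasDerivAt (fun v : ℝ => 2*v/(2+v)) (4/(2+u)^2) u := by
      have := (((hasDerivAt_id u).const_mul 2)).div ((hasDerivAt_id u).const_add 2)
        (by positivity)
      refine this.congr_deriv ?_
      simp only [id]
      field_simp
      ring
    refine (h1.sub h2).congr_deriv ?_
    field_simp
    ring
  have hmono : MonotoneOn (fun v => Real.log (1+v) - 2*v/(2+v)) (Set.Ici (0:ℝ)) := by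
    apply monotoneOn_of_deriv_nonneg (convex_Ici 0)
    · apply ContinuousOn.sub
      · apply ContinuousOn.log (by fun_prop)
        intro v hv; simp at hv; positivity
      · apply ContinuousOn.div (by fun_prop) (by fun_prop)
        intro v hv; simp at hv; positivity
    · intro v hv
      rw [interior_Ici] at hv
      exact (key v (le_of_lt hv)).differentiableAt.differentiableWithinAt
    · intro v hv
      rw [interior_Ici] at hv
      rw [(key v hv.le).deriv]
      have hv' : (0:ℝ) < v := hv
      positivity
  have h0 := hmono (Set.self_mem_Ici) (Set.mem_Ici.mpr ht) ht
  simp at h0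
  linarith

private lemma pade_upper (t : ℝ) (ht : 0 ≤ t) : Real.log (1+t) ≤ t*(t+2)/(2*(t+1)) := by
  have key : ∀ u : ℝ, 0 ≤ u →
      HasDerivAt (fun v => v*(v+2)/(2*(v+1)) - Real.log (1+v)) (u^2/(2*(1+u)^2)) u := by
    intro u hu
    have h1 : HasDerivAt (fun v : ℝ => Real.log (1+v)) (1/(1+u)) u := by
      have := ((hasDerivAt_id u).const_add 1).log (by positivity)
      simpa using this
    have h2 : HasDerivAt (fun v : ℝ => v*(v+2)/(2*(v+1))) ((u^2+2*u+2)/(2*(u+1)^2)) u := by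
      have := ((hasDerivAt_id u).mul ((hasDerivAt_id u).add_const 2)).div
        (((hasDerivAt_id u).add_const 1).const_mul 2) (by positivity)
      refine this.congr_deriv ?_
      simp only [id, Pi.mul_apply]
      field_simp
      ring
    refine (h2.sub h1).congr_deriv ?_
    field_simp
    ring
  have hmono : MonotoneOn (fun v => v*(v+2)/(2*(v+1)) - Real.log (1+v)) (Set.Ici (0:ℝ)) := by
    apply monotoneOn_of_deriv_nonneg (convex_Ici 0)
    · apply ContinuousOn.sub
      · apply ContinuousOn.div (by fun_prop) (by fun_prop)
        intro v hv; simp at hv; positivity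
      · apply ContinuousOn.log (by fun_prop)
        intro v hv; simp at hv; positivity
    · intro v hv
      rw [interior_Ici] at hv
      exact (key v (le_of_lt hv)).differentiableAt.differentiableWithinAt
    · intro v hv
      rw [interior_Ici] at hv
      rw [(key v hv.le).deriv]
      have hv' : (0:ℝ) < v := hv
      positivity
  have h0 := hmono (Set.self_mem_Ici) (Set.mem_Ici.mpr ht) ht
  simp at h0
  linarith

private lemma log_ratio (t : ℝ) (ht : 0 < t) :
    Real.log (t+1) - Real.log t = Real.log (1 + 1/t) := by
  rw [← Real.log_div (by positivity) (ne_of_gt ht)]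
  congr 1
  field_simp

private lemma dd_nonneg (t : ℝ) (ht : 0 < t) : 0 ≤ dd t := by
  have h := pade_lower (1/t) (by positivity)
  rw [dd, log_ratio t ht]
  have h2 : 2*(1/t)/(2+1/t) = 2/(2*t+1) := by
    rw [div_eq_div_iff (by positivity) (by positivity)]
    field_simp
  rw [h2] at h
  have h3 : (t+1/2) * (2/(2*t+1)) = 1 := by
    field_simp
  nlinarith [Real.log_nonneg (by nlinarith [one_div_pos.mpr ht] : (1:ℝ) ≤ 1 + 1/t)]

private lemma dd_le (t : ℝ) (ht : 0 < t) :
    dd t ≤ (1/2)*(Real.log (t+1) - Real.log t) - (1/2)*(Real.log (t+2) - Real.log (t+1)) := by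
  have hL := pade_upper (1/t) (by positivity)
  have hL2 : (1/t)*(1/t+2)/(2*(1/t+1)) = (2*t+1)/(2*t*(t+1)) := by
    rw [div_eq_div_iff (by positivity) (by positivity)]
    field_simp
    ring
  rw [hL2] at hL
  have hM : Real.log (1 + 1/(t+1)) ≤ 1/(t+1) := by
    have := Real.log_le_sub_one_of_pos (show (0:ℝ) < 1 + 1/(t+1) by positivity)
    linarith
  rw [dd, log_ratio t ht]
  have e2 : Real.log (t+2) - Real.log (t+1) = Real.log (1 + 1/(t+1)) := by
    have := log_ratio (t+1) (by positivity)
    convert this using 3 <;> ring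
  rw [e2]
  have htL : t * Real.log (1+1/t) ≤ (2*t+1)/(2*(t+1)) := by
    have h4 : t * ((2*t+1)/(2*t*(t+1))) = (2*t+1)/(2*(t+1)) := by
      field_simp
    nlinarith
  have h5 : (2*t+1)/(2*(t+1)) + (1/2)*(1/(t+1)) = 1 := by
    field_simp
    ring
  nlinarith

private lemma sum_dd (x : ℝ) (n : ℕ) :
    ∑ k ∈ Finset.range n, dd (x+k) =
      (x+n-1/2)*Real.log (x+n) - (x-1/2)*Real.log x
        - (∑ k ∈ Finset.range n, Real.log (x+k)) - n := by
  induction n with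
  | zero => simp
  | succ n ih =>
    rw [Finset.sum_range_succ, ih, Finset.sum_range_succ, dd]
    have e1 : x + ((n:ℝ)+1) = (x + n) + 1 := by ring
    push_cast
    rw [e1]
    ring

private lemma sum_dd_le (x : ℝ) (hx : 0 < x) (n : ℕ) :
    ∑ k ∈ Finset.range n, dd (x+k) ≤ (1/2)*(Real.log (x+1) - Real.log x) := by
  set g : ℕ → ℝ := fun k => (1/2)*(Real.log (x+k+1) - Real.log (x+k)) with hg
  have h1 : ∑ k ∈ Finset.range n, dd (x+k) ≤ ∑ k ∈ Finset.range n, (g k - g (k+1)) := by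
    apply Finset.sum_le_sum
    intro k _
    have := dd_le (x+k) (by positivity)
    simp only [hg]
    push_cast
    refine le_of_le_of_eq this ?_
    ring_nf
  have h2 : ∑ k ∈ Finset.range n, (g k - g (k+1)) = g 0 - g n := Finset.sum_range_sub' g n
  have h3 : 0 ≤ g n := by
    simp only [hg]
    have := Real.log_le_log (by positivity : (0:ℝ) < x + n) (by linarith : x+(n:ℝ) ≤ x+n+1)
    linarith
  have h4 : g 0 = (1/2)*(Real.log (x+1) - Real.log x) := by simp [hg]
  linarith

private lemma log_gammaSeq (x : ℝ) (hx : 0 < x) (n : ℕ) (hn : 1 ≤ n) :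
    Real.log (Real.GammaSeq x n) =
      x * Real.log n + Real.log (Nat.factorial n : ℝ)
        - ∑ j ∈ Finset.range (n+1), Real.log (x + j) := by
  have hN : (0:ℝ) < n := by exact_mod_cast hn
  have hprod : ∀ j ∈ Finset.range (n+1), x + (j:ℝ) ≠ 0 := by
    intro j _; positivity
  have hf : (Nat.factorial n : ℝ) ≠ 0 := by exact_mod_cast (Nat.factorial_pos n).ne'
  have hpow : (n:ℝ)^x ≠ 0 := (Real.rpow_pos_of_pos hN x).ne'
  rw [Real.GammaSeq, Real.log_div (mul_ne_zero hpow hf) (Finset.prod_ne_zero_iff.mpr hprod),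
    Real.log_mul hpow hf, Real.log_rpow hN, Real.log_prod hprod]

private lemma log_stirlingSeq' (n : ℕ) (hn : 1 ≤ n) :
    Real.log (Stirling.stirlingSeq n) =
      Real.log (Nat.factorial n : ℝ)
        - ((1/2)*(Real.log 2 + Real.log n) + n * (Real.log n - 1)) := by
  have hN : (0:ℝ) < n := by exact_mod_cast hn
  have hf : (Nat.factorial n : ℝ) ≠ 0 := by exact_mod_cast (Nat.factorial_pos n).ne'
  have hs : Real.sqrt (2*(n:ℝ)) ≠ 0 := by positivity
  have hp : ((n:ℝ)/Real.exp 1)^n ≠ 0 := by positivity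
  rw [Stirling.stirlingSeq, Real.log_div hf (mul_ne_zero hs hp), Real.log_mul hs hp,
    Real.log_sqrt (by positivity), Real.log_mul two_ne_zero hN.ne', Real.log_pow,
    Real.log_div hN.ne' (Real.exp_ne_zero 1), Real.log_exp]
  ring

private lemma tendsto_sum_dd (x : ℝ) (hx : 0 < x) :
    Tendsto (fun n : ℕ => ∑ k ∈ Finset.range n, dd (x+k)) atTop
      (𝓝 (Real.log (Real.Gamma x)
        - ((x-1/2)*Real.log x - x + Real.log (Real.sqrt (2*Real.pi))))) := by
  have hA : Tendsto (fun n : ℕ => ((n:ℝ)) * Real.log (1 + x/n)) atTop (𝓝 x) :=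
    (Real.tendsto_mul_log_one_add_div_atTop x).comp tendsto_natCast_atTop_atTop
  have hxn : Tendsto (fun n : ℕ => x/(n:ℝ)) atTop (𝓝 0) :=
    tendsto_const_nhds.div_atTop tendsto_natCast_atTop_atTop
  have hlog0 : Tendsto (fun n : ℕ => Real.log (1 + x/n)) atTop (𝓝 0) := by
    have h1 : Tendsto (fun n : ℕ => (1:ℝ) + x/n) atTop (𝓝 1) := by
      simpa using tendsto_const_nhds.add hxn
    have := (Real.continuousAt_log one_ne_zero).tendsto.comp h1
    rw [Real.log_one] at this
    exact this
  have hA2 : Tendsto (fun n : ℕ => (x + (n:ℝ) + 1/2) * Real.log (1 + x/n)) atTop (𝓝 x) := by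
    have h2 : Tendsto (fun n : ℕ => (x + 1/2) * Real.log (1 + x/n)) atTop (𝓝 0) := by
      simpa using hlog0.const_mul (x + 1/2)
    have h3 := hA.add h2
    simp only [add_zero] at h3
    apply h3.congr
    intro n
    ring
  have hB : Tendsto (fun n : ℕ => Real.log (Real.GammaSeq x n)) atTop
      (𝓝 (Real.log (Real.Gamma x))) :=
    (Real.continuousAt_log (Real.Gamma_pos_of_pos hx).ne').tendsto.comp
      (Real.GammaSeq_tendsto_Gamma x)
  have hC : Tendsto (fun n : ℕ => Real.log (Stirling.stirlingSeq n)) atTop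
      (𝓝 (Real.log (Real.sqrt Real.pi))) :=
    (Real.continuousAt_log (by positivity : Real.sqrt Real.pi ≠ 0)).tendsto.comp
      Stirling.tendsto_stirlingSeq_sqrt_pi
  have hF := ((hA2.add hB).sub hC).sub_const ((1/2)*Real.log 2 + (x-1/2)*Real.log x)
  have hval : x + Real.log (Real.Gamma x) - Real.log (Real.sqrt Real.pi)
      - ((1/2)*Real.log 2 + (x-1/2)*Real.log x)
      = Real.log (Real.Gamma x)
        - ((x-1/2)*Real.log x - x + Real.log (Real.sqrt (2*Real.pi))) := by
    rw [Real.log_sqrt Real.pi_pos.le, Real.log_sqrt (by positivity : (0:ℝ) ≤ 2*Real.pi),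
      Real.log_mul two_ne_zero Real.pi_pos.ne']
    ring
  rw [← hval]
  apply hF.congr'
  filter_upwards [eventually_ge_atTop 1] with n hn
  have hN : (0:ℝ) < n := by exact_mod_cast hn
  have e1 : Real.log (1 + x/n) = Real.log (x+n) - Real.log n := by
    rw [show (1:ℝ) + x/n = (x+n)/n by field_simp; ring, Real.log_div (by positivity) hN.ne']
  rw [sum_dd, log_gammaSeq x hx n hn, log_stirlingSeq' n hn, e1, Finset.sum_range_succ]
  ring

theorem stirling_double_inequality (x : ℝ) (hx : 0 < x) :
    1 ≤ Real.Gamma x / (Real.sqrt (2 * Real.pi) * Real.exp (-x) * x ^ (x - 1 / 2)) ∧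
    Real.Gamma x / (Real.sqrt (2 * Real.pi) * Real.exp (-x) * x ^ (x - 1 / 2)) ≤
      (1 + 1 / x) ^ ((1 : ℝ) / 2) := by
  set c := Real.log (Real.sqrt (2*Real.pi)) with hc
  set μ := Real.log (Real.Gamma x) - ((x-1/2)*Real.log x - x + c) with hμ
  have hμ0 : 0 ≤ μ :=
    ge_of_tendsto (tendsto_sum_dd x hx) (Eventually.of_forall fun n =>
      Finset.sum_nonneg fun k _ => dd_nonneg _ (by positivity))
  have hμ1 : μ ≤ (1/2)*(Real.log (x+1) - Real.log x) :=
    le_of_tendsto (tendsto_sum_dd x hx) (Eventually.of_forall fun n => sum_dd_le x hx n)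
  have hden : Real.sqrt (2*Real.pi) * Real.exp (-x) * x ^ (x-1/2)
      = Real.exp ((x-1/2)*Real.log x - x + c) := by
    rw [Real.rpow_def_of_pos hx,
      show (x-1/2)*Real.log x - x + c = c + -x + Real.log x * (x-1/2) by ring,
      Real.exp_add, Real.exp_add, hc, Real.exp_log (Real.sqrt_pos.mpr (by positivity))]
  have hratio : Real.Gamma x / (Real.sqrt (2*Real.pi) * Real.exp (-x) * x ^ (x-1/2))
      = Real.exp μ := by
    rw [hden]
    nth_rewrite 1 [← Real.exp_log (Real.Gamma_pos_of_pos hx)]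
    rw [← Real.exp_sub]
  constructor
  · rw [hratio]
    exact Real.one_le_exp hμ0
  · rw [hratio]
    have hr : (1 + 1/x : ℝ) ^ ((1:ℝ)/2) = Real.exp (Real.log (1+1/x) * (1/2)) :=
      Real.rpow_def_of_pos (by positivity) _
    rw [hr]
    apply Real.exp_le_exp.mpr
    have := log_ratio x hx
    linarith
end

section
/- For all x > 0, e^(−1)·(1 + 1/x)^(x+1/2) ≤ Γ(x)/(√(2π)·e^(−x)·x^(x−1/2)) ≤ e^(−x/2−3/4)·(1 + 1/x)^((x+1)²/2). -/
open Real Filter Topology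

namespace WebsterAux

lemma log_ratio_lower {u : ℝ} (h0 : 0 ≤ u) (h1 : u < 1) :
    2*u + 2*u^3/3 ≤ Real.log (1+u) - Real.log (1-u) := by
  set f : ℝ → ℝ := fun t => Real.log (1+t) - Real.log (1-t) - (2*t + 2*t^3/3) with hf
  have hd : ∀ t : ℝ, -1 < t → t < 1 →
      HasDerivAt f (1/(1+t) - (-1)/(1-t) - (2 + 2*t^2)) t := by
    intro t ht0 ht1
    have ha : HasDerivAt (fun t : ℝ => 1 + t) 1 t := (hasDerivAt_id t).const_add 1
    have hb : HasDerivAt (fun t : ℝ => 1 - t) (-1) t := by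
      simpa using (hasDerivAt_id t).const_sub 1
    have hla := ha.log (by linarith)
    have hlb := hb.log (by linarith)
    have hp : HasDerivAt (fun t : ℝ => 2*t + 2*t^3/3) (2 + 2*t^2) t := by
      have h3 : HasDerivAt (fun t : ℝ => t^3) (3*t^2) t := by
        simpa using hasDerivAt_pow 3 t
      have := ((hasDerivAt_id t).const_mul 2).add ((h3.const_mul 2).div_const 3)
      exact this.congr_deriv (by ring)
    exact (hla.sub hlb).sub hp
  have hmono : MonotoneOn f (Set.Icc 0 u) := by
    apply monotoneOn_of_deriv_nonneg (convex_Icc 0 u)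
    · intro t ht
      exact (hd t (by linarith [ht.1]) (by linarith [ht.2])).continuousAt.continuousWithinAt
    · intro t ht
      rw [interior_Icc] at ht
      exact (hd t (by linarith [ht.1]) (by linarith [ht.2])).differentiableAt.differentiableWithinAt
    · intro t ht
      rw [interior_Icc] at ht
      rw [(hd t (by linarith [ht.1]) (by linarith [ht.2])).deriv]
      have h1t : (0:ℝ) < 1 + t := by linarith [ht.1]
      have h2t : (0:ℝ) < 1 - t := by linarith [ht.2]
      have : 1/(1+t) - (-1)/(1-t) - (2 + 2*t^2) = 2*t^4 / ((1+t)*(1-t)) := by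
        field_simp; ring
      rw [this]
      positivity
  have h0u : (0:ℝ) ∈ Set.Icc 0 u := ⟨le_refl 0, h0⟩
  have huu : u ∈ Set.Icc 0 u := ⟨h0, le_refl u⟩
  have := hmono h0u huu h0
  simp only [hf] at this
  norm_num at this
  linarith

lemma log_ratio_upper {u : ℝ} (h0 : 0 ≤ u) (h1 : u < 1) :
    Real.log (1+u) - Real.log (1-u) ≤ 2*u + 2*u^3/(3*(1-u^2)) := by
  set f : ℝ → ℝ := fun t => 2*t + 2*t^3/(3*(1-t^2)) - (Real.log (1+t) - Real.log (1-t)) with hf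
  have hd : ∀ t : ℝ, -1 < t → t < 1 →
      HasDerivAt f (2 + (2*(3*t^2) * (3*(1-t^2)) - 2*t^3 * (3*(0-2*t)))/(3*(1-t^2))^2
        - (1/(1+t) - (-1)/(1-t))) t := by
    intro t ht0 ht1
    have ha : HasDerivAt (fun t : ℝ => 1 + t) 1 t := (hasDerivAt_id t).const_add 1
    have hb : HasDerivAt (fun t : ℝ => 1 - t) (-1) t := by
      simpa using (hasDerivAt_id t).const_sub 1
    have hla := ha.log (by linarith)
    have hlb := hb.log (by linarith)
    have h3 : HasDerivAt (fun t : ℝ => 2*t^3) (2*(3*t^2)) t := by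
      simpa using (hasDerivAt_pow 3 t).const_mul 2
    have hden : HasDerivAt (fun t : ℝ => 3*(1-t^2)) (3*(0-2*t)) t := by
      have h2 : HasDerivAt (fun t : ℝ => 1 - t^2) (0-2*t) t := by
        simpa using ((hasDerivAt_pow 2 t).const_sub 1)
      exact h2.const_mul 3
    have hdenne : 3*(1-t^2) ≠ 0 := by nlinarith
    have hq := h3.div hden hdenne
    have := (((hasDerivAt_id t).const_mul 2).add hq).sub (hla.sub hlb)
    exact this.congr_deriv (by ring)
  have hmono : MonotoneOn f (Set.Icc 0 u) := by
    apply monotoneOn_of_deriv_nonneg (convex_Icc 0 u)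
    · intro t ht
      exact (hd t (by linarith [ht.1]) (by linarith [ht.2])).continuousAt.continuousWithinAt
    · intro t ht
      rw [interior_Icc] at ht
      exact (hd t (by linarith [ht.1]) (by linarith [ht.2])).differentiableAt.differentiableWithinAt
    · intro t ht
      rw [interior_Icc] at ht
      rw [(hd t (by linarith [ht.1]) (by linarith [ht.2])).deriv]
      have h1t : (0:ℝ) < 1 + t := by linarith [ht.1]
      have h2t : (0:ℝ) < 1 - t := by linarith [ht.2]
      have hsq : (0:ℝ) < 1 - t^2 := by nlinarith
      have key : 2 + (2*(3*t^2) * (3*(1-t^2)) - 2*t^3 * (3*(0-2*t)))/(3*(1-t^2))^2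
          - (1/(1+t) - (-1)/(1-t)) = (4/3) * t^4 / (1-t^2)^2 := by
        field_simp
        ring
      rw [key]
      positivity
  have h0u : (0:ℝ) ∈ Set.Icc 0 u := ⟨le_refl 0, h0⟩
  have huu : u ∈ Set.Icc 0 u := ⟨h0, le_refl u⟩
  have := hmono h0u huu h0
  simp only [hf] at this
  norm_num at this
  linarith


lemma log_lb {y : ℝ} (hy : 0 < y) :
    2/(2*y+1) + 2/(3*(2*y+1)^3) ≤ Real.log (1 + 1/y) := by
  have hu0 : (0:ℝ) ≤ 1/(2*y+1) := by positivity
  have hu1 : 1/(2*y+1) < 1 := by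
    rw [div_lt_one (by linarith)]; linarith
  have h := log_ratio_lower hu0 hu1
  have e1 : Real.log (1 + 1/(2*y+1)) - Real.log (1 - 1/(2*y+1)) = Real.log (1 + 1/y) := by
    rw [← Real.log_div (by positivity) (by
      intro h; apply absurd h; simp only [sub_ne_zero]; intro h2; nlinarith [h2])]
    congr 1
    field_simp
    ring
  have e2 : 2*(1/(2*y+1)) + 2*(1/(2*y+1))^3/3 = 2/(2*y+1) + 2/(3*(2*y+1)^3) := by
    field_simp
  rw [e1, e2] at h
  exact h

lemma log_ub {y : ℝ} (hy : 0 < y) :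
    Real.log (1 + 1/y) ≤ 2/(2*y+1) + 1/(6*y*(y+1)*(2*y+1)) := by
  have hu0 : (0:ℝ) ≤ 1/(2*y+1) := by positivity
  have hu1 : 1/(2*y+1) < 1 := by
    rw [div_lt_one (by linarith)]; linarith
  have h := log_ratio_upper hu0 hu1
  have e1 : Real.log (1 + 1/(2*y+1)) - Real.log (1 - 1/(2*y+1)) = Real.log (1 + 1/y) := by
    rw [← Real.log_div (by positivity) (by
      intro h; apply absurd h; simp only [sub_ne_zero]; intro h2; nlinarith [h2])]
    congr 1
    field_simp
    ring
  have hne : 1 - (1/(2*y+1))^2 ≠ 0 := by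
    have h2 : (1/(2*y+1))^2 < 1 := by nlinarith
    exact ne_of_gt (by linarith)
  have e2 : 2*(1/(2*y+1)) + 2*(1/(2*y+1))^3/(3*(1 - (1/(2*y+1))^2))
      = 2/(2*y+1) + 1/(6*y*(y+1)*(2*y+1)) := by
    have h1 : (2*y+1) ≠ 0 := by positivity
    have h2 : 1 - (1/(2*y+1))^2 = 4*y*(y+1)/(2*y+1)^2 := by field_simp; ring
    rw [h2]
    field_simp
    ring
  rw [e1, e2] at h
  exact h


noncomputable def mu (y : ℝ) : ℝ :=
  Real.log (Real.Gamma y) + y - (y - 1/2) * Real.log y - Real.log (Real.sqrt (2*Real.pi))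

noncomputable def gg (y : ℝ) : ℝ := (y + 1/2) * Real.log (1 + 1/y) - 1

noncomputable def uu (y : ℝ) : ℝ := -y/2 - 3/4 + ((y+1)^2/2) * Real.log (1 + 1/y)

lemma gg_nonneg {y : ℝ} (hy : 0 < y) : 0 ≤ gg y := by
  have h := log_lb hy
  have h2 : (y + 1/2) * (2/(2*y+1) + 2/(3*(2*y+1)^3)) ≤ (y + 1/2) * Real.log (1 + 1/y) :=
    mul_le_mul_of_nonneg_left h (by linarith)
  have h3 : (y + 1/2) * (2/(2*y+1) + 2/(3*(2*y+1)^3)) = 1 + 1/(3*(2*y+1)^2) := by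
    field_simp
  unfold gg
  rw [h3] at h2
  have : (0:ℝ) < 1/(3*(2*y+1)^2) := by positivity
  linarith

lemma feq {y : ℝ} (hy : 0 < y) : mu y = mu (y+1) + gg y := by
  have hG : Real.Gamma (y+1) = y * Real.Gamma y := Real.Gamma_add_one hy.ne'
  have hGpos : 0 < Real.Gamma y := Real.Gamma_pos_of_pos hy
  have hlogG : Real.log (Real.Gamma (y+1)) = Real.log y + Real.log (Real.Gamma y) := by
    rw [hG, Real.log_mul hy.ne' hGpos.ne']
  have hlog1 : Real.log (1 + 1/y) = Real.log (y+1) - Real.log y := by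
    rw [← Real.log_div (by linarith) hy.ne']
    congr 1
    field_simp
  unfold mu gg
  rw [hlogG, hlog1]
  ring

lemma mu_step {y : ℝ} (hy : 0 < y) : mu (y+1) ≤ mu y := by
  have := feq hy
  have := gg_nonneg hy
  linarith

lemma uu_step {y : ℝ} (hy : 0 < y) : uu (y+1) - mu (y+1) ≤ uu y - mu y := by
  have hy1 : (0:ℝ) < y + 1 := by linarith
  have hrw : uu y - uu (y+1) - gg y
      = 3/2 + (y^2/2) * Real.log (1 + 1/y) - ((y+2)^2/2) * Real.log (1 + 1/(y+1)) := by
    unfold uu gg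
    ring_nf
  have A : (y^2/2) * (2/(2*y+1) + 2/(3*(2*y+1)^3)) ≤ (y^2/2) * Real.log (1 + 1/y) :=
    mul_le_mul_of_nonneg_left (log_lb hy) (by positivity)
  have B : ((y+2)^2/2) * Real.log (1 + 1/(y+1))
      ≤ ((y+2)^2/2) * (2/(2*(y+1)+1) + 1/(6*(y+1)*((y+1)+1)*(2*(y+1)+1))) :=
    mul_le_mul_of_nonneg_left (log_ub hy1) (by positivity)
  have key : 3/2 + (y^2/2) * (2/(2*y+1) + 2/(3*(2*y+1)^3))
      - ((y+2)^2/2) * (2/(2*(y+1)+1) + 1/(6*(y+1)*((y+1)+1)*(2*(y+1)+1)))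
      = (16*y^3 + 30*y^2 + 17*y + 4)/(12*(y+1)*(2*y+3)*(2*y+1)^3) := by
    field_simp
    ring
  have keypos : (0:ℝ) ≤ (16*y^3 + 30*y^2 + 17*y + 4)/(12*(y+1)*(2*y+3)*(2*y+1)^3) := by
    positivity
  have hfe := feq hy
  linarith

lemma uu_nonneg {y : ℝ} (hy : 0 < y) : 0 ≤ uu y := by
  have A : ((y+1)^2/2) * (2/(2*y+1) + 2/(3*(2*y+1)^3)) ≤ ((y+1)^2/2) * Real.log (1 + 1/y) :=
    mul_le_mul_of_nonneg_left (log_lb hy) (by positivity)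
  have key : -y/2 - 3/4 + ((y+1)^2/2) * (2/(2*y+1) + 2/(3*(2*y+1)^3))
      = 1/(4*(2*y+1)) + (y+1)^2/(3*(2*y+1)^3) := by
    field_simp
    ring
  have : (0:ℝ) ≤ 1/(4*(2*y+1)) + (y+1)^2/(3*(2*y+1)^3) := by positivity
  unfold uu
  linarith

lemma uu_le {y : ℝ} (hy : 1 ≤ y) : uu y ≤ 1/y := by
  have hy0 : (0:ℝ) < y := by linarith
  have A : ((y+1)^2/2) * Real.log (1 + 1/y)
      ≤ ((y+1)^2/2) * (2/(2*y+1) + 1/(6*y*(y+1)*(2*y+1))) :=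
    mul_le_mul_of_nonneg_left (log_ub hy0) (by positivity)
  have key : -y/2 - 3/4 + ((y+1)^2/2) * (2/(2*y+1) + 1/(6*y*(y+1)*(2*y+1)))
      = (4*y+1)/(12*y*(2*y+1)) := by
    field_simp
    ring
  have last : (4*y+1)/(12*y*(2*y+1)) ≤ 1/y := by
    rw [div_le_div_iff₀ (by positivity) hy0]
    nlinarith
  unfold uu
  linarith


lemma mu_nat (k : ℕ) :
    mu ((k:ℝ)+1) = Real.log (Stirling.stirlingSeq (k+1)) - Real.log (Real.sqrt Real.pi) := by
  have hk : (0:ℝ) < (k:ℝ)+1 := by positivity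
  have hfac : (0:ℝ) < (Nat.factorial k : ℝ) := by exact_mod_cast Nat.factorial_pos k
  have hpi : (0:ℝ) < Real.pi := Real.pi_pos
  have e1 : Real.log (Stirling.stirlingSeq (k+1))
      = Real.log ((Nat.factorial k : ℝ)) + Real.log ((k:ℝ)+1)
        - (Real.log (2*((k:ℝ)+1)) / 2 + ((k:ℝ)+1) * (Real.log ((k:ℝ)+1) - 1)) := by
    rw [Stirling.stirlingSeq]
    push_cast [Nat.factorial_succ]
    rw [Real.log_div (by positivity) (by positivity)]
    rw [Real.log_mul (by positivity) (by positivity)]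
    rw [Real.log_mul (by positivity) (by positivity)]
    rw [Real.log_sqrt (by positivity), Real.log_pow]
    rw [Real.log_div (by positivity) (Real.exp_ne_zero 1), Real.log_exp]
    push_cast
    ring
  have e2 : Real.log (Real.Gamma ((k:ℝ)+1)) = Real.log ((Nat.factorial k : ℝ)) := by
    rw [Real.Gamma_nat_eq_factorial]
  have e3 : Real.log (2*((k:ℝ)+1)) = Real.log 2 + Real.log ((k:ℝ)+1) := by
    rw [Real.log_mul (by norm_num) (by positivity)]
  have e4 : Real.log (Real.sqrt (2*Real.pi)) = (Real.log 2 + Real.log Real.pi)/2 := by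
    rw [Real.log_sqrt (by positivity), Real.log_mul (by norm_num) hpi.ne']
  have e5 : Real.log (Real.sqrt Real.pi) = Real.log Real.pi / 2 := by
    rw [Real.log_sqrt hpi.le]
  unfold mu
  rw [e1, e2, e3, e4, e5]
  ring

lemma tendsto_mu_nat : Tendsto (fun k : ℕ => mu ((k:ℝ)+1)) atTop (𝓝 0) := by
  have hsp : (0:ℝ) < Real.sqrt Real.pi := Real.sqrt_pos.2 Real.pi_pos
  have h1 : Tendsto (fun k : ℕ => Stirling.stirlingSeq (k+1)) atTop (𝓝 (Real.sqrt Real.pi)) :=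
    Stirling.tendsto_stirlingSeq_sqrt_pi.comp (tendsto_add_atTop_nat 1)
  have h2 : Tendsto (fun k : ℕ => Real.log (Stirling.stirlingSeq (k+1))) atTop
      (𝓝 (Real.log (Real.sqrt Real.pi))) :=
    ((Real.continuousAt_log hsp.ne').tendsto).comp h1
  have h3 := h2.sub_const (Real.log (Real.sqrt Real.pi))
  rw [sub_self] at h3
  have : (fun k : ℕ => mu ((k:ℝ)+1))
      = fun k => Real.log (Stirling.stirlingSeq (k+1)) - Real.log (Real.sqrt Real.pi) :=
    funext fun k => mu_nat k
  rw [this]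
  exact h3

lemma mu_conv_upper {a s : ℝ} (ha : 1 ≤ a) (hs0 : 0 ≤ s) (hs1 : s ≤ 1) :
    mu (a + s) ≤ mu a + 1/(2*a) := by
  have ha0 : (0:ℝ) < a := by linarith
  have has : (0:ℝ) < a + s := by linarith
  have hcg := Real.convexOn_log_Gamma
  have h := hcg.2 (Set.mem_Ioi.2 ha0) (Set.mem_Ioi.2 (by linarith : (0:ℝ) < a+1))
    (by linarith : (0:ℝ) ≤ 1 - s) hs0 (by ring)
  simp only [Function.comp, smul_eq_mul] at h
  have harg : (1-s)*a + s*(a+1) = a + s := by ring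
  rw [harg] at h
  have hlogG : Real.log (Real.Gamma (a+1)) = Real.log a + Real.log (Real.Gamma a) := by
    rw [Real.Gamma_add_one ha0.ne', Real.log_mul ha0.ne' (Real.Gamma_pos_of_pos ha0).ne']
  rw [hlogG] at h
  -- h : log Γ (a+s) ≤ (1-s) * log Γ a + s * (log a + log Γ a)
  have hD : s/(a+s) ≤ Real.log (a+s) - Real.log a := by
    have hl := Real.log_le_sub_one_of_pos (show (0:ℝ) < a/(a+s) by positivity)
    rw [Real.log_div ha0.ne' has.ne'] at hl
    have : a/(a+s) - 1 = -(s/(a+s)) := by field_simp; ring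
    rw [this] at hl
    linarith
  have hE : (a+s-1/2)*(s/(a+s)) ≤ (a+s-1/2)*(Real.log (a+s) - Real.log a) :=
    mul_le_mul_of_nonneg_left hD (by linarith)
  have hX : (a+s-1/2)*(Real.log (a+s) - Real.log a)
      = (a+s-1/2)*Real.log (a+s) - s*Real.log a - (a-1/2)*Real.log a := by ring
  have e2 : (a+s-1/2)*(s/(a+s)) = s - s/(2*(a+s)) := by field_simp
  have e3 : s/(2*(a+s)) ≤ 1/(2*a) := by
    rw [div_le_div_iff₀ (by linarith) (by linarith)]
    nlinarith
  unfold mu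
  rw [hX] at hE
  rw [e2] at hE
  linarith

lemma mu_conv_lower {a s : ℝ} (ha : 1 ≤ a) (hs0 : 0 ≤ s) (hs1 : s ≤ 1) :
    mu (a+1) - 1/(2*(a+1)) ≤ mu (a + s) := by
  have ha0 : (0:ℝ) < a := by linarith
  have has : (0:ℝ) < a + s := by linarith
  have ha1 : (0:ℝ) < a + 1 := by linarith
  have hcg := Real.convexOn_log_Gamma
  have h := hcg.2 (Set.mem_Ioi.2 has) (Set.mem_Ioi.2 (by linarith : (0:ℝ) < a+s+1))
    hs0 (by linarith : (0:ℝ) ≤ 1 - s) (by ring)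
  simp only [Function.comp, smul_eq_mul] at h
  have harg : s*(a+s) + (1-s)*(a+s+1) = a + 1 := by ring
  rw [harg] at h
  have hlogG : Real.log (Real.Gamma (a+s+1)) = Real.log (a+s) + Real.log (Real.Gamma (a+s)) := by
    rw [Real.Gamma_add_one has.ne', Real.log_mul has.ne' (Real.Gamma_pos_of_pos has).ne']
  rw [hlogG] at h
  -- h : log Γ (a+1) ≤ s * log Γ (a+s) + (1-s) * (log (a+s) + log Γ (a+s))
  have hD : (1-s)/(a+1) ≤ Real.log (a+1) - Real.log (a+s) := by
    have hl := Real.log_le_sub_one_of_pos (show (0:ℝ) < (a+s)/(a+1) by positivity)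
    rw [Real.log_div has.ne' ha1.ne'] at hl
    have : (a+s)/(a+1) - 1 = -((1-s)/(a+1)) := by field_simp; ring
    rw [this] at hl
    linarith
  have hE : (a+1/2)*((1-s)/(a+1)) ≤ (a+1/2)*(Real.log (a+1) - Real.log (a+s)) :=
    mul_le_mul_of_nonneg_left hD (by linarith)
  have hX : (a+1/2)*(Real.log (a+1) - Real.log (a+s))
      = (a+1/2)*Real.log (a+1) - (1-s)*Real.log (a+s) - (a+s-1/2)*Real.log (a+s) := by ring
  have e2 : (a+1/2)*((1-s)/(a+1)) = (1-s) - (1-s)/(2*(a+1)) := by field_simp; ring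
  have e3 : (1-s)/(2*(a+1)) ≤ 1/(2*(a+1)) := by
    rw [div_le_div_iff₀ (by linarith) (by linarith)]
    nlinarith
  unfold mu
  rw [hX, e2] at hE
  linarith


lemma tendsto_mu_nat' : Tendsto (fun k : ℕ => mu (k:ℝ)) atTop (𝓝 0) := by
  rw [← Filter.tendsto_add_atTop_iff_nat 1]
  have : (fun k : ℕ => mu ((k+1 : ℕ):ℝ)) = fun k : ℕ => mu ((k:ℝ)+1) := by
    funext k; push_cast; ring_nf
  rw [this]
  exact tendsto_mu_nat

lemma tendsto_mu_shift {x : ℝ} (hx : 0 < x) :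
    Tendsto (fun n : ℕ => mu (x + n)) atTop (𝓝 0) := by
  set m0 := Nat.floor x with hm0
  set s := x - m0 with hs
  have hs0 : 0 ≤ s := sub_nonneg.2 (Nat.floor_le hx.le)
  have hs1 : s ≤ 1 := by
    have := Nat.lt_floor_add_one x
    simp only [hs]
    push_cast
    linarith
  -- upper sequence
  have hup : Tendsto (fun n : ℕ => mu ((n + m0 : ℕ):ℝ) + 1/(2*((n + m0 : ℕ):ℝ)))
      atTop (𝓝 0) := by
    have h1 : Tendsto (fun n : ℕ => mu ((n + m0 : ℕ):ℝ)) atTop (𝓝 0) :=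
      tendsto_mu_nat'.comp (tendsto_add_atTop_nat m0)
    have h2 : Tendsto (fun n : ℕ => ((n + m0 : ℕ):ℝ)) atTop atTop :=
      tendsto_natCast_atTop_atTop.comp (tendsto_add_atTop_nat m0)
    have h3 : Tendsto (fun n : ℕ => 2*((n + m0 : ℕ):ℝ)) atTop atTop :=
      h2.const_mul_atTop (by norm_num)
    have h4 : Tendsto (fun n : ℕ => 1/(2*((n + m0 : ℕ):ℝ))) atTop (𝓝 0) := by
      simpa [one_div, Pi.inv_def, mul_inv, mul_comm] using h3.inv_tendsto_atTop
    simpa using h1.add h4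
  -- lower sequence
  have hlo : Tendsto (fun n : ℕ => mu (((n + m0 : ℕ):ℝ)+1) - 1/(2*(((n + m0 : ℕ):ℝ)+1)))
      atTop (𝓝 0) := by
    have h1 : Tendsto (fun n : ℕ => mu (((n + m0 : ℕ):ℝ)+1)) atTop (𝓝 0) :=
      tendsto_mu_nat.comp (tendsto_add_atTop_nat m0)
    have h2 : Tendsto (fun n : ℕ => ((n + m0 : ℕ):ℝ)) atTop atTop :=
      tendsto_natCast_atTop_atTop.comp (tendsto_add_atTop_nat m0)
    have h3 : Tendsto (fun n : ℕ => 2*(((n + m0 : ℕ):ℝ)+1)) atTop atTop := by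
      apply Tendsto.const_mul_atTop (by norm_num : (0:ℝ) < 2)
      exact tendsto_atTop_add_const_right _ 1 h2
    have h4 : Tendsto (fun n : ℕ => 1/(2*(((n + m0 : ℕ):ℝ)+1))) atTop (𝓝 0) := by
      simpa [one_div, Pi.inv_def, mul_inv, mul_comm] using h3.inv_tendsto_atTop
    simpa using h1.sub h4
  apply tendsto_of_tendsto_of_tendsto_of_le_of_le' hlo hup
  · filter_upwards [eventually_ge_atTop 1] with n hn
    have ha : (1:ℝ) ≤ ((n + m0 : ℕ):ℝ) := by
      have : (1:ℕ) ≤ n + m0 := le_trans hn (Nat.le_add_right n m0)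
      exact_mod_cast this
    have harg : x + n = ((n + m0 : ℕ):ℝ) + s := by
      simp only [hs]
      push_cast
      ring
    rw [harg]
    exact mu_conv_lower ha hs0 hs1
  · filter_upwards [eventually_ge_atTop 1] with n hn
    have ha : (1:ℝ) ≤ ((n + m0 : ℕ):ℝ) := by
      have : (1:ℕ) ≤ n + m0 := le_trans hn (Nat.le_add_right n m0)
      exact_mod_cast this
    have harg : x + n = ((n + m0 : ℕ):ℝ) + s := by
      simp only [hs]
      push_cast
      ring
    rw [harg]
    exact mu_conv_upper ha hs0 hs1

lemma nonneg_of_steps (h : ℝ → ℝ) {x : ℝ} (hx : 0 < x)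
    (step : ∀ y : ℝ, 0 < y → h (y+1) ≤ h y)
    (lim : Tendsto (fun n : ℕ => h (x + n)) atTop (𝓝 0)) : 0 ≤ h x := by
  have key : ∀ n : ℕ, h (x + n) ≤ h x := by
    intro n
    induction n with
    | zero => simp
    | succ k ih =>
      have hst := step (x + k) (by positivity)
      have : x + ((k:ℝ)+1) = (x + k) + 1 := by ring
      calc h (x + ((k+1 : ℕ):ℝ)) = h ((x + k) + 1) := by push_cast; rw [this]
        _ ≤ h (x + k) := hst
        _ ≤ h x := ih
  exact le_of_tendsto lim (Filter.Eventually.of_forall key)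

lemma mu_nonneg {x : ℝ} (hx : 0 < x) : 0 ≤ mu x :=
  nonneg_of_steps mu hx (fun y hy => mu_step hy) (tendsto_mu_shift hx)

lemma tendsto_uu_shift {x : ℝ} (hx : 0 < x) :
    Tendsto (fun n : ℕ => uu (x + n)) atTop (𝓝 0) := by
  have h2 : Tendsto (fun n : ℕ => x + (n:ℝ)) atTop atTop :=
    tendsto_atTop_add_const_left _ x tendsto_natCast_atTop_atTop
  have h4 : Tendsto (fun n : ℕ => 1/(x + (n:ℝ))) atTop (𝓝 0) := by
    simpa [one_div, Pi.inv_def] using h2.inv_tendsto_atTop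
  apply tendsto_of_tendsto_of_tendsto_of_le_of_le' tendsto_const_nhds h4
  · filter_upwards [eventually_ge_atTop 0] with n _
    exact uu_nonneg (by positivity)
  · filter_upwards [h2.eventually_ge_atTop 1] with n hn
    exact uu_le hn

lemma mu_le_uu {x : ℝ} (hx : 0 < x) : mu x ≤ uu x := by
  have h := nonneg_of_steps (fun y => uu y - mu y) hx
    (fun y hy => uu_step hy)
    (by simpa using (tendsto_uu_shift hx).sub (tendsto_mu_shift hx))
  simpa using h

lemma gg_le_mu {x : ℝ} (hx : 0 < x) : gg x ≤ mu x := by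
  have h := feq hx
  have h2 := mu_nonneg (show (0:ℝ) < x + 1 by linarith)
  linarith

end WebsterAux

open WebsterAux in
theorem stirling_webster_inequality (x : ℝ) (hx : 0 < x) :
    Real.exp (-1) * (1 + 1 / x) ^ (x + 1 / 2) ≤
      Real.Gamma x / (Real.sqrt (2 * Real.pi) * Real.exp (-x) * x ^ (x - 1 / 2)) ∧
    Real.Gamma x / (Real.sqrt (2 * Real.pi) * Real.exp (-x) * x ^ (x - 1 / 2)) ≤
      Real.exp (-x / 2 - 3 / 4) * (1 + 1 / x) ^ ((x + 1) ^ 2 / 2) := by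
  have hpi : (0:ℝ) < Real.pi := Real.pi_pos
  have hsq : (0:ℝ) < Real.sqrt (2*Real.pi) := Real.sqrt_pos.2 (by positivity)
  have hG : (0:ℝ) < Real.Gamma x := Real.Gamma_pos_of_pos hx
  have h1x : (0:ℝ) < 1 + 1/x := by positivity
  have hQ : Real.Gamma x / (Real.sqrt (2 * Real.pi) * Real.exp (-x) * x ^ (x - 1/2))
      = Real.exp (mu x) := by
    rw [Real.rpow_def_of_pos hx]
    rw [show Real.Gamma x = Real.exp (Real.log (Real.Gamma x)) from (Real.exp_log hG).symm,
      show Real.sqrt (2*Real.pi) = Real.exp (Real.log (Real.sqrt (2*Real.pi))) from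
        (Real.exp_log hsq).symm]
    rw [← Real.exp_add, ← Real.exp_add, ← Real.exp_sub]
    congr 1
    unfold mu
    ring
  have hL : Real.exp (-1) * (1 + 1/x) ^ (x + 1/2) = Real.exp (gg x) := by
    rw [Real.rpow_def_of_pos h1x, ← Real.exp_add]
    congr 1
    unfold gg
    ring
  have hR : Real.exp (-x/2 - 3/4) * (1 + 1/x) ^ ((x + 1)^2/2) = Real.exp (uu x) := by
    rw [Real.rpow_def_of_pos h1x, ← Real.exp_add]
    congr 1
    unfold uu
    ring
  rw [hQ, hL, hR]
  exact ⟨Real.exp_le_exp.2 (gg_le_mu hx), Real.exp_le_exp.2 (mu_le_uu hx)⟩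
end

section
/- Burnside's formula: ln Γ(x) − ln(√(2π)·((x−1/2)/e)^(x−1/2)) tends to 0 as x → ∞. -/
open Real Filter
open Nat

noncomputable def burnEps (n : ℕ) : ℝ :=
  Real.log (Stirling.stirlingSeq n) - Real.log (Real.sqrt Real.pi)

lemma burnEps_tendsto : Filter.Tendsto burnEps atTop (nhds 0) := by
  have h1 : Filter.Tendsto (fun n => Real.log (Stirling.stirlingSeq n)) atTop
      (nhds (Real.log (Real.sqrt Real.pi))) :=
    ((Real.continuousAt_log (by positivity)).tendsto).comp
      Stirling.tendsto_stirlingSeq_sqrt_pi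
  have := h1.sub (tendsto_const_nhds (x := Real.log (Real.sqrt Real.pi)))
  rw [sub_self] at this; exact this

lemma abs_log_one_add_sub (t : ℝ) (ht : -1 < t) :
    |Real.log (1 + t) - t| ≤ t ^ 2 / (1 + t) := by
  have h1 : (0:ℝ) < 1 + t := by linarith
  have h2 : Real.log (1 + t) ≤ t := by
    have := Real.log_le_sub_one_of_pos h1; linarith
  have h3 : t / (1 + t) ≤ Real.log (1 + t) := by
    have h := Real.log_le_sub_one_of_pos (x := (1+t)⁻¹) (by positivity)
    rw [Real.log_inv] at h
    have h4 : (1+t)⁻¹ - 1 = -(t/(1+t)) := by field_simp; ring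
    rw [h4] at h
    linarith
  rw [abs_le]
  constructor
  · have h5 : t - t/(1+t) = t^2/(1+t) := by field_simp; ring
    linarith
  · have : (0:ℝ) ≤ t^2/(1+t) := by positivity
    linarith

lemma log_factorial_eq (n : ℕ) (hn : 1 ≤ n) :
    Real.log ((n ! : ℕ) : ℝ) = burnEps n + 1/2 * Real.log (2 * Real.pi)
      + ((n:ℝ) + 1/2) * Real.log n - n := by
  have hn0 : (0:ℝ) < n := by exact_mod_cast hn
  have h := Stirling.log_stirlingSeq_formula n
  have hlog2n : Real.log (2 * (n:ℝ)) = Real.log 2 + Real.log n :=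
    Real.log_mul (by norm_num) (ne_of_gt hn0)
  have hlogne : Real.log ((n:ℝ) / Real.exp 1) = Real.log n - 1 := by
    rw [Real.log_div (ne_of_gt hn0) (Real.exp_ne_zero 1), Real.log_exp]
  have hsqrt : Real.log (Real.sqrt Real.pi) = 1/2 * Real.log Real.pi := by
    rw [Real.log_sqrt Real.pi_pos.le]; ring
  have h2pi : Real.log (2 * Real.pi) = Real.log 2 + Real.log Real.pi :=
    Real.log_mul (by norm_num) (ne_of_gt Real.pi_pos)
  unfold burnEps
  rw [h, hlog2n, hlogne, hsqrt, h2pi]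
  ring

lemma gamma_cast (k : ℕ) : Real.Gamma ((k:ℝ)+2) = ((k+1)! : ℝ) := by
  rw [show ((k:ℝ)+2) = ((k+1:ℕ):ℝ)+1 by push_cast; ring, Real.Gamma_nat_eq_factorial]

lemma fact_log (k : ℕ) :
    Real.log (((k+2)! : ℕ) : ℝ) = Real.log ((k:ℝ)+2) + Real.log (((k+1)! : ℕ) : ℝ) := by
  rw [show (k+2)! = (k+2) * (k+1)! from rfl]
  push_cast
  rw [Real.log_mul (by positivity) (by positivity)]

lemma gamma_upper (k : ℕ) (x : ℝ) (h1 : (k:ℝ)+2 ≤ x) (h2 : x < (k:ℝ)+3) :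
    Real.log (Real.Gamma x) ≤
      Real.log (((k+2)! : ℕ) : ℝ) + (x - ((k:ℝ)+3)) * Real.log ((k:ℝ)+2) := by
  set t := x - ((k:ℝ)+2) with htdef
  have hmem1 : ((k:ℝ)+2) ∈ Set.Ioi (0:ℝ) := by
    simp only [Set.mem_Ioi]; positivity
  have hmem2 : ((k:ℝ)+3) ∈ Set.Ioi (0:ℝ) := by
    simp only [Set.mem_Ioi]; positivity
  have hcx := Real.convexOn_log_Gamma.2 hmem1 hmem2
    (show (0:ℝ) ≤ 1 - t by rw [htdef]; linarith)
    (show (0:ℝ) ≤ t by rw [htdef]; linarith)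
    (show (1 - t) + t = 1 by ring)
  have hcomb : (1 - t) • ((k:ℝ)+2) + t • ((k:ℝ)+3) = x := by
    simp only [smul_eq_mul]; ring
  rw [hcomb] at hcx
  simp only [Function.comp, smul_eq_mul] at hcx
  rw [gamma_cast k, show ((k:ℝ)+3) = ((k+1:ℕ):ℝ)+2 by push_cast; ring,
    gamma_cast (k+1)] at hcx
  have hf := fact_log k
  have hff : (((k+1)+1)! : ℕ) = ((k+2)! : ℕ) := by norm_num
  rw [hff] at hcx
  have key : (1 - t) * Real.log (((k+1)! : ℕ) : ℝ) + t * Real.log (((k+2)! : ℕ) : ℝ)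
      = Real.log (((k+2)! : ℕ) : ℝ) + (x - ((k:ℝ)+3)) * Real.log ((k:ℝ)+2) := by
    rw [hf, htdef]; ring
  linarith [hcx, key]

lemma gamma_lower (k : ℕ) (x : ℝ) (h1 : (k:ℝ)+2 ≤ x) (h2 : x < (k:ℝ)+3) :
    Real.log (((k+2)! : ℕ) : ℝ) - (((k:ℝ)+3) - x) * Real.log ((k:ℝ)+3)
      ≤ Real.log (Real.Gamma x) := by
  set w := ((k:ℝ)+4) - x with hwdef
  have hw1 : 1 < w := by simp only [hwdef]; linarith
  have hw2 : w ≤ 2 := by simp only [hwdef]; linarith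
  have hw0 : 0 < w := by linarith
  have hmemx : x ∈ Set.Ioi (0:ℝ) := by
    simp only [Set.mem_Ioi]; have : (0:ℝ) ≤ k := k.cast_nonneg; linarith
  have hmem4 : ((k:ℝ)+4) ∈ Set.Ioi (0:ℝ) := by
    simp only [Set.mem_Ioi]; positivity
  have hcx := Real.convexOn_log_Gamma.2 hmemx hmem4
    (show (0:ℝ) ≤ 1/w by positivity)
    (show (0:ℝ) ≤ 1 - 1/w by rw [sub_nonneg, div_le_one hw0]; linarith)
    (show 1/w + (1 - 1/w) = 1 by ring)
  have hcomb : (1/w) • x + (1 - 1/w) • ((k:ℝ)+4) = (k:ℝ)+3 := by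
    simp only [smul_eq_mul]
    field_simp
    rw [hwdef]; ring
  rw [hcomb] at hcx
  simp only [Function.comp, smul_eq_mul] at hcx
  rw [show ((k:ℝ)+3) = ((k+1:ℕ):ℝ)+2 by push_cast; ring, gamma_cast (k+1),
    show ((k:ℝ)+4) = ((k+2:ℕ):ℝ)+2 by push_cast; ring, gamma_cast (k+2)] at hcx
  have hff : (((k+1)+1)! : ℕ) = ((k+2)! : ℕ) := by norm_num
  have hff2 : (((k+2)+1)! : ℕ) = ((k+3)! : ℕ) := by norm_num
  rw [hff, hff2] at hcx
  have hf3 : Real.log (((k+3)! : ℕ) : ℝ)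
      = Real.log ((k:ℝ)+3) + Real.log (((k+2)! : ℕ) : ℝ) := by
    have := fact_log (k+1)
    rw [hff, hff2] at this
    rw [this]; push_cast; ring_nf
  rw [hf3] at hcx
  have hmul := mul_le_mul_of_nonneg_left hcx (le_of_lt hw0)
  have hwx : ((k:ℝ)+3) - x = w - 1 := by simp only [hwdef]; ring
  rw [hwx]
  have key : w * (1 / w * Real.log (Real.Gamma x)
      + (1 - 1 / w) * (Real.log ((k:ℝ)+3) + Real.log (((k+2)! : ℕ) : ℝ)))
      = Real.log (Real.Gamma x)
        + (w - 1) * (Real.log ((k:ℝ)+3) + Real.log (((k+2)! : ℕ) : ℝ)) := by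
    field_simp
  rw [key] at hmul
  nlinarith [hmul, hw1]

lemma est1 (u N : ℝ) (hu : 2 ≤ u) (hd : |u - N| ≤ 1/2) :
    |u * (Real.log N - Real.log u) + (u - N)| ≤ 1/u := by
  have hu0 : (0:ℝ) < u := by linarith
  have hN0 : (0:ℝ) < N := by
    rcases abs_le.1 hd with ⟨h1, h2⟩; linarith
  set t := (N - u)/u with htdef
  have ht : -1 < t := by
    rw [htdef, neg_lt, ← neg_div, div_lt_one hu0]
    linarith
  have h1t : 1 + t = N/u := by rw [htdef]; field_simp; ring
  have hlog : Real.log N - Real.log u = Real.log (1 + t) := by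
    rw [h1t, Real.log_div hN0.ne' hu0.ne']
  have heq : u * (Real.log N - Real.log u) + (u - N)
      = u * (Real.log (1 + t) - t) := by
    rw [hlog, htdef]; field_simp; ring
  rw [heq, abs_mul, abs_of_pos hu0]
  have habs := abs_log_one_add_sub t ht
  have step : u * |Real.log (1 + t) - t| ≤ u * (t^2/(1+t)) :=
    mul_le_mul_of_nonneg_left habs hu0.le
  have heq2 : u * (t^2/(1+t)) = (N - u)^2 / N := by
    rw [h1t, htdef]; field_simp
  have hsq : (N - u)^2 ≤ 1/4 := by
    have : |N - u| ≤ 1/2 := by rw [abs_sub_comm]; exact hd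
    nlinarith [abs_nonneg (N - u), sq_abs (N - u)]
  have hfin : (N - u)^2 / N ≤ 1/u := by
    rw [div_le_div_iff₀ hN0 hu0]
    rcases abs_le.1 hd with ⟨ha, hb⟩
    nlinarith
  linarith [step, heq2 ▸ step]

lemma main_bound (x : ℝ) (hx : 3 ≤ x) :
    |Real.log (Real.Gamma x)
        - Real.log (Real.sqrt (2 * Real.pi) * ((x - 1 / 2) / Real.exp 1) ^ (x - 1 / 2))|
      ≤ |burnEps ⌊x⌋₊| + (1/(x - 1/2) + 1/(x - 1)) := by
  have hx0 : (0:ℝ) < x := by linarith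
  set n := ⌊x⌋₊ with hndef
  have hn3 : 3 ≤ n := Nat.le_floor (by exact_mod_cast hx)
  have hnx : (n:ℝ) ≤ x := Nat.floor_le hx0.le
  have hxn : x < (n:ℝ) + 1 := Nat.lt_floor_add_one x
  obtain ⟨k, hk⟩ : ∃ k, n = k + 2 := ⟨n - 2, by omega⟩
  have hN : (n:ℝ) = (k:ℝ) + 2 := by rw [hk]; push_cast; ring
  set N : ℝ := (k:ℝ) + 2 with hNdef
  have h1 : N ≤ x := by rw [← hN]; exact hnx
  have h2 : x < N + 1 := by
    have : (n:ℝ) + 1 = N + 1 := by rw [hN]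
    linarith [hxn, this]
  have h2' : x < (k:ℝ) + 3 := by rw [hNdef] at h2; linarith
  -- target T
  set u : ℝ := x - 1/2 with hudef
  have hu0 : (0:ℝ) < u := by rw [hudef]; linarith
  have hT : Real.log (Real.sqrt (2 * Real.pi) * ((x - 1 / 2) / Real.exp 1) ^ (x - 1 / 2))
      = 1/2 * Real.log (2 * Real.pi) + u * (Real.log u - 1) := by
    have hbase : (0:ℝ) < (x - 1/2) / Real.exp 1 := by
      apply div_pos (by linarith) (Real.exp_pos 1)
    rw [Real.log_mul (by positivity) (ne_of_gt (Real.rpow_pos_of_pos hbase _)),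
      Real.log_rpow hbase, Real.log_sqrt (by positivity),
      Real.log_div (by linarith) (Real.exp_ne_zero 1), Real.log_exp]
    rw [hudef]; ring
  -- Stirling for n!
  have hA := log_factorial_eq (k+2) (by omega)
  rw [show ((k+2:ℕ):ℝ) = N by push_cast; rw [hNdef]] at hA
  have hEps : burnEps n = burnEps (k+2) := by rw [hk]
  -- convexity bounds
  have hup := gamma_upper k x (by rw [hNdef] at h1; exact h1) h2'
  have hlo := gamma_lower k x (by rw [hNdef] at h1; exact h1) h2'
  -- estimates
  have hd : |u - N| ≤ 1/2 := by
    rw [abs_le, hudef]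
    constructor <;> linarith
  have he1 := est1 u N (by rw [hudef]; linarith) hd
  have hN2 : (2:ℝ) ≤ N := by rw [hNdef]; have : (0:ℝ) ≤ k := k.cast_nonneg; linarith
  have he2 : |((N + 1) - x) * (Real.log N - Real.log (N+1))| ≤ 1/(x-1) := by
    have hc : Real.log (N+1) - Real.log N ≤ 1/N := by
      have h := Real.log_le_sub_one_of_pos (x := (N+1)/N) (by positivity)
      rw [Real.log_div (by positivity) (by positivity)] at h
      have : (N+1)/N - 1 = 1/N := by field_simp; ring
      linarith [this ▸ h]
    have hcpos : 0 ≤ Real.log (N+1) - Real.log N := by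
      have := Real.log_le_log (by positivity : (0:ℝ) < N) (by linarith : N ≤ N+1)
      linarith
    have hw0 : 0 < (N + 1) - x := by linarith
    have hw1 : (N + 1) - x ≤ 1 := by linarith
    rw [abs_mul, abs_of_pos hw0, abs_sub_comm, abs_of_nonneg hcpos]
    have hNx : N ≥ x - 1 := by linarith
    have hx1 : (0:ℝ) < x - 1 := by linarith
    calc ((N+1) - x) * (Real.log (N+1) - Real.log N)
        ≤ 1 * (1/N) := by
          apply mul_le_mul hw1 hc hcpos (by norm_num)
      _ ≤ 1/(x-1) := by
          rw [one_mul]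
          apply one_div_le_one_div_of_le hx1 hNx
  -- combine
  set G := Real.log (Real.Gamma x) with hGdef
  set A := Real.log (((k+2)! : ℕ) : ℝ) with hAdef
  set c2 := Real.log N with hc2
  set c3 := Real.log (N+1) with hc3
  have hup' : G ≤ A + (x - (N+1)) * c2 := by
    have h33 : (x - ((k:ℝ)+3)) = (x - (N+1)) := by rw [hNdef]; ring
    rw [h33] at hup
    exact hup
  have hlo' : A - ((N+1) - x) * c3 ≤ G := by
    have h33 : (((k:ℝ)+3) - x) = ((N+1) - x) := by rw [hNdef]; ring
    have h32 : Real.log ((k:ℝ)+3) = c3 := by rw [hc3, hNdef]; ring_nf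
    rw [h33, h32] at hlo
    exact hlo
  have hAe : A = burnEps (k+2) + 1/2 * Real.log (2 * Real.pi) + (N + 1/2) * c2 - N := hA
  rw [hT, hEps]
  rw [abs_le]
  have he1' := abs_le.1 he1
  have he2' := abs_le.1 he2
  -- bridge equalities (all provable by ring)
  have b1 : u * (c2 - Real.log u) + (u - N) = u * c2 - u * Real.log u + (u - N) := by ring
  have b2 : u * (Real.log u - 1) = u * Real.log u - u := by ring
  have b3 : (N + 1/2) * c2 + (x - (N+1)) * c2 = u * c2 := by rw [hudef]; ring
  have b4 : ((N+1) - x) * (c2 - c3) = ((N+1) - x) * c2 - ((N+1) - x) * c3 := by ring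
  have b5 : (N + 1/2) * c2 - ((N+1) - x) * c2 = u * c2 := by rw [hudef]; ring
  rw [b1] at he1'
  rw [b4] at he2'
  have habs1 : -|burnEps (k+2)| ≤ burnEps (k+2) := neg_abs_le _
  have habs2 : burnEps (k+2) ≤ |burnEps (k+2)| := le_abs_self _
  have hpos : (0:ℝ) ≤ 1/(x-1) := by
    have hx1 : (0:ℝ) < x-1 := by linarith
    positivity
  clear_value n N u G A c2 c3
  constructor
  · rw [b2]
    linarith [hlo', hAe, he1'.1, he2'.1, habs1, b5]
  · rw [b2]
    linarith [hup', hAe, he1'.2, habs2, hpos, b3]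

theorem burnside_formula :
    Filter.Tendsto
      (fun x : ℝ => Real.log (Real.Gamma x)
          - Real.log (Real.sqrt (2 * Real.pi) * ((x - 1 / 2) / Real.exp 1) ^ (x - 1 / 2)))
      Filter.atTop (nhds 0) := by
  apply squeeze_zero_norm'
    (a := fun x : ℝ => |burnEps ⌊x⌋₊| + (1/(x - 1/2) + 1/(x - 1)))
  · filter_upwards [eventually_ge_atTop (3:ℝ)] with x hx
    rw [Real.norm_eq_abs]
    exact main_bound x hx
  · have h1 : Filter.Tendsto (fun x : ℝ => |burnEps ⌊x⌋₊|) atTop (nhds 0) := by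
      have := (burnEps_tendsto.comp (tendsto_nat_floor_atTop (α := ℝ))).abs
      simpa using this
    have h2 : Filter.Tendsto (fun x : ℝ => 1/(x - 1/2)) atTop (nhds 0) := by
      have := tendsto_inv_atTop_zero.comp
        (tendsto_atTop_add_const_right atTop (-(1/2):ℝ) tendsto_id)
      simpa [one_div, sub_eq_add_neg, Function.comp_def] using this
    have h3 : Filter.Tendsto (fun x : ℝ => 1/(x - 1)) atTop (nhds 0) := by
      have := tendsto_inv_atTop_zero.comp
        (tendsto_atTop_add_const_right atTop (-(1):ℝ) tendsto_id)
      simpa [one_div, sub_eq_add_neg, Function.comp_def] using this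
    have := h1.add (h2.add h3)
    simpa using this
end

section
/- Raabe's formula: for every x > 0, ∫_x^{x+1} ln Γ(t) dt = (1/2)·ln(2π) + x·ln x − x. -/
open Real MeasureTheory intervalIntegral

noncomputable def raabeF (x : ℝ) : ℝ := ∫ t in x..(x + 1), Real.log (Real.Gamma t)

lemma raabe_contOn : ContinuousOn (fun t => Real.log (Real.Gamma t)) (Set.Ioi 0) := by
  intro y hy
  have h1 : ContinuousAt Real.Gamma y := by
    apply (Real.differentiableAt_Gamma ?_).continuousAt
    intro m
    have : (0:ℝ) < y := hy
    intro h; rw [h] at this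
    simp at this
    linarith [Nat.cast_nonneg (α := ℝ) m, this]
  exact ((Real.continuousAt_log (Real.Gamma_pos_of_pos hy).ne').comp h1).continuousWithinAt

lemma raabe_intble {a b : ℝ} (ha : 0 < a) (hb : 0 < b) :
    IntervalIntegrable (fun t => Real.log (Real.Gamma t)) volume a b := by
  apply (raabe_contOn.mono ?_).intervalIntegrable
  intro t ht
  exact lt_of_lt_of_le (lt_min ha hb) ht.1

lemma raabe_hasDeriv {x : ℝ} (hx : 0 < x) : HasDerivAt raabeF (Real.log x) x := by
  set H : ℝ → ℝ := fun y => ∫ t in (1:ℝ)..y, Real.log (Real.Gamma t) with hH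
  have hD : ∀ {b : ℝ}, 0 < b → HasDerivAt H (Real.log (Real.Gamma b)) b := by
    intro b hb
    exact intervalIntegral.integral_hasDerivAt_right (raabe_intble one_pos hb)
      (raabe_contOn.stronglyMeasurableAtFilter isOpen_Ioi b hb)
      ((raabe_contOn b hb).continuousAt (isOpen_Ioi.mem_nhds hb))
  have heq : raabeF =ᶠ[nhds x] (fun y => H (y + 1) - H y) := by
    filter_upwards [isOpen_Ioi.mem_nhds hx] with y (hy : 0 < y)
    have := intervalIntegral.integral_add_adjacent_intervals (a := (1:ℝ)) (b := y)
      (c := y + 1) (raabe_intble one_pos hy) (raabe_intble hy (by linarith))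
    simp only [raabeF, hH]
    linarith [this]
  have h1 : HasDerivAt (fun y => H (y + 1)) (Real.log (Real.Gamma (x + 1))) x := by
    have := (hD (by linarith : (0:ℝ) < x + 1)).comp x ((hasDerivAt_id x).add_const 1)
    rw [mul_one] at this
    exact this
  have h2 := h1.sub (hD hx)
  have hkey : Real.log (Real.Gamma (x + 1)) - Real.log (Real.Gamma x) = Real.log x := by
    rw [Real.Gamma_add_one hx.ne', Real.log_mul hx.ne' (Real.Gamma_pos_of_pos hx).ne']
    ring
  rw [hkey] at h2
  exact h2.congr_of_eventuallyEq heq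

lemma raabe_funEq {x : ℝ} (hx : 0 < x) :
    raabeF x = raabeF 1 + x * Real.log x - x + 1 := by
  have h0 : (0:ℝ) ∉ Set.uIcc 1 x := by
    rw [Set.mem_uIcc]; push_neg
    constructor <;> intro h <;> [linarith; linarith]
  have hderiv : ∀ t ∈ Set.uIcc (1:ℝ) x, HasDerivAt raabeF (Real.log t) t := by
    intro t ht
    apply raabe_hasDeriv
    rcases Set.mem_uIcc.mp ht with h | h <;> linarith
  have hint : IntervalIntegrable Real.log volume 1 x :=
    (Real.continuousOn_log.mono (by simpa using h0)).intervalIntegrable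
  have := intervalIntegral.integral_eq_sub_of_hasDerivAt hderiv hint
  rw [integral_log] at this
  simp at this
  linarith

lemma raabe_F1 : raabeF 1 = (1/2) * Real.log (2 * Real.pi) - 1 := by
  have hsplit : raabeF 1 = (∫ t in (1:ℝ)..(3/2), Real.log (Real.Gamma t)) +
      ∫ t in (3/2:ℝ)..2, Real.log (Real.Gamma t) := by
    rw [raabeF, show (1:ℝ) + 1 = 2 by norm_num,
      ← intervalIntegral.integral_add_adjacent_intervals (b := (3/2:ℝ))
      (raabe_intble one_pos (by norm_num)) (raabe_intble (by norm_num) (by norm_num))]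
  have hshift : (∫ t in (3/2:ℝ)..2, Real.log (Real.Gamma t)) =
      ∫ t in (1:ℝ)..(3/2), Real.log (Real.Gamma (t + 1/2)) := by
    rw [intervalIntegral.integral_comp_add_right (fun t => Real.log (Real.Gamma t)) (1/2)]
    norm_num
  have hintble2 : IntervalIntegrable (fun t => Real.log (Real.Gamma (t + 1/2)))
      volume 1 (3/2) := by
    have := (raabe_intble (a := 3/2) (b := 2) (by norm_num) (by norm_num))
    have := this.comp_add_right (1/2)
    norm_num at this ⊢
    exact this
  have hcomb : raabeF 1 = ∫ t in (1:ℝ)..(3/2),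
      (Real.log (Real.Gamma t) + Real.log (Real.Gamma (t + 1/2))) := by
    rw [hsplit, hshift, intervalIntegral.integral_add (raabe_intble one_pos (by norm_num)) hintble2]
  have hdup : ∀ t ∈ Set.uIcc (1:ℝ) (3/2),
      Real.log (Real.Gamma t) + Real.log (Real.Gamma (t + 1/2)) =
        Real.log (Real.Gamma (2 * t)) + ((1 - 2*t) * Real.log 2 + (1/2) * Real.log π) := by
    intro t ht
    have ht1 : (1:ℝ) ≤ t := by
      rcases Set.mem_uIcc.mp ht with h | h <;> linarith [h.1]
    have hΓt := Real.Gamma_pos_of_pos (by linarith : (0:ℝ) < t)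
    have hΓt2 := Real.Gamma_pos_of_pos (by linarith : (0:ℝ) < t + 1/2)
    have hΓ2t := Real.Gamma_pos_of_pos (by linarith : (0:ℝ) < 2 * t)
    have h2p : (0:ℝ) < (2:ℝ) ^ (1 - 2*t) := Real.rpow_pos_of_pos two_pos _
    have := Real.Gamma_mul_Gamma_add_half t
    calc Real.log (Real.Gamma t) + Real.log (Real.Gamma (t + 1/2))
        = Real.log (Real.Gamma t * Real.Gamma (t + 1/2)) := by
          rw [Real.log_mul hΓt.ne' hΓt2.ne']
      _ = Real.log (Real.Gamma (2*t) * (2:ℝ) ^ (1 - 2*t) * Real.sqrt π) := by rw [this]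
      _ = Real.log (Real.Gamma (2*t)) + ((1 - 2*t) * Real.log 2 + (1/2) * Real.log π) := by
          rw [Real.log_mul (by positivity) (Real.sqrt_pos.mpr pi_pos).ne',
            Real.log_mul hΓ2t.ne' h2p.ne', Real.log_rpow two_pos, Real.log_sqrt pi_pos.le]
          ring
  have hI2 : (∫ t in (1:ℝ)..(3/2), Real.log (Real.Gamma (2 * t))) = (1/2) * raabeF 2 := by
    rw [intervalIntegral.integral_comp_mul_left (fun t => Real.log (Real.Gamma t))
      (two_ne_zero), raabeF]
    norm_num
  have hI3 : (∫ t in (1:ℝ)..(3/2), ((1 - 2*t) * Real.log 2 + (1/2) * Real.log π)) =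
      -(3/4) * Real.log 2 + (1/4) * Real.log π := by
    have hd : ∀ t ∈ Set.uIcc (1:ℝ) (3/2), HasDerivAt
        (fun t => (t - t^2) * Real.log 2 + t/2 * Real.log π)
        ((1 - 2*t) * Real.log 2 + (1/2) * Real.log π) t := by
      intro t _
      have h1 : HasDerivAt (fun t : ℝ => (t - t^2) * Real.log 2 + t/2 * Real.log π)
          ((1 - 2*t^(2-1)) * Real.log 2 + (1/2) * Real.log π) t := by
        exact (((hasDerivAt_id t).sub (hasDerivAt_pow 2 t)).mul_const _).add
          (((hasDerivAt_id t).div_const 2).mul_const _)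
      convert h1 using 2 <;> norm_num
    rw [intervalIntegral.integral_eq_sub_of_hasDerivAt hd (Continuous.intervalIntegrable (by fun_prop) _ _)]
    norm_num
    ring
  have hdupint : raabeF 1 = (1/2) * raabeF 2 + (-(3/4) * Real.log 2 + (1/4) * Real.log π) := by
    rw [hcomb, intervalIntegral.integral_congr hdup,
      intervalIntegral.integral_add ?_ (Continuous.intervalIntegrable (by fun_prop) _ _), hI2, hI3]
    · have := (raabe_intble (a := 2) (b := 3) (by norm_num) (by norm_num))
      have h := this.comp_mul_left (c := 2)
      norm_num at h ⊢
      exact h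
  have hF2 : raabeF 2 = raabeF 1 + 2 * Real.log 2 - 1 := by
    have := raabe_funEq (x := 2) (by norm_num)
    linarith
  rw [Real.log_mul two_ne_zero pi_ne_zero]
  rw [hF2] at hdupint
  linarith

theorem raabe_formula (x : ℝ) (hx : 0 < x) :
    ∫ t in x..(x + 1), Real.log (Real.Gamma t) =
      (1 / 2) * Real.log (2 * Real.pi) + x * Real.log x - x := by
  have := raabe_funEq hx
  have h1 := raabe_F1
  show raabeF x = _
  rw [this, h1]
  ring
end

section
/- If f : (0,∞) → ℝ is continuous, eventually convex or eventually concave, and satisfies ∫_x^{x+1} f(t) dt = (1/2)·ln(2π) + x·ln x − x for all x > 0, then f(x) = ln Γ(x) for all x > 0. -/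
open Real Set Filter MeasureTheory intervalIntegral

noncomputable def Lg (x : ℝ) : ℝ := Real.log (Real.Gamma x)

lemma Lg_contOn : ContinuousOn Lg (Ioi 0) := by
  intro x hx
  have hx' : (0:ℝ) < x := hx
  have hG : ContinuousAt Real.Gamma x :=
    (Real.differentiableAt_Gamma (fun m => ne_of_gt (lt_of_le_of_lt (neg_nonpos.mpr (Nat.cast_nonneg m)) hx'))).continuousAt
  exact ((Real.continuousAt_log (Real.Gamma_pos_of_pos hx').ne').comp hG).continuousWithinAt

lemma Lg_rec {x : ℝ} (hx : 0 < x) : Lg (x + 1) = Lg x + Real.log x := by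
  unfold Lg
  rw [Real.Gamma_add_one hx.ne', Real.log_mul hx.ne' (Real.Gamma_pos_of_pos hx).ne']
  ring

lemma Lg_convex : ConvexOn ℝ (Ioi 0) Lg := Real.convexOn_log_Gamma

lemma Lg_add_nat_le (k : ℕ) : ∀ t : ℝ, 0 < t → Lg (t + k) - Lg t ≤ k * Real.log (t + k) := by
  induction k with
  | zero => intro t ht; simp
  | succ k ih =>
    intro t ht
    have h1 : Lg (t + (k+1:ℕ)) = Lg (t + k) + Real.log (t + k) := by
      have : (t + (k+1:ℕ) : ℝ) = (t + k) + 1 := by push_cast; ring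
      rw [this, Lg_rec (by positivity)]
    have h2 := ih t ht
    have h3 : Real.log (t + k) ≤ Real.log (t + (k+1:ℕ)) := by
      apply Real.log_le_log (by positivity); push_cast; linarith
    have h4 : (k:ℝ) * Real.log (t + k) ≤ k * Real.log (t + (k+1:ℕ)) := by
      apply mul_le_mul_of_nonneg_left h3 (by positivity)
    push_cast at *
    nlinarith [h3]

lemma Lg_add_nat_ge (k : ℕ) : ∀ t : ℝ, 0 < t → (k:ℝ) * Real.log t ≤ Lg (t + k) - Lg t := by
  induction k with
  | zero => intro t ht; simp
  | succ k ih =>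
    intro t ht
    have h1 : Lg (t + (k+1:ℕ)) = Lg (t + k) + Real.log (t + k) := by
      have : (t + (k+1:ℕ) : ℝ) = (t + k) + 1 := by push_cast; ring
      rw [this, Lg_rec (by positivity)]
    have h2 := ih t ht
    have h3 : Real.log t ≤ Real.log (t + k) := by
      apply Real.log_le_log ht; linarith [Nat.cast_nonneg (α := ℝ) k]
    push_cast at *
    nlinarith

lemma Lg_second_diff {t h : ℝ} {k : ℕ} (hh : 0 < h) (hhk : h ≤ k) (htk : (k:ℝ) < t) :
    Lg (t + h) + Lg (t - h) - 2 * Lg t ≤ h * (Real.log (t + k) - Real.log (t - k)) := by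
  have hk0 : 0 < (k:ℝ) := lt_of_lt_of_le hh hhk
  have ht : 0 < t := lt_trans hk0 htk
  set l : ℝ := h / k with hl
  have hl0 : 0 ≤ l := by positivity
  have hl1 : l ≤ 1 := by rw [hl, div_le_one hk0]; exact hhk
  have hlk : l * k = h := by rw [hl]; field_simp
  have mem1 : t ∈ Ioi (0:ℝ) := ht
  have mem2 : t + k ∈ Ioi (0:ℝ) := by simp only [mem_Ioi]; linarith
  have mem3 : t - k ∈ Ioi (0:ℝ) := by simp only [mem_Ioi]; linarith
  have c1 : Lg (t + h) ≤ (1 - l) * Lg t + l * Lg (t + k) := by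
    have := Lg_convex.2 mem1 mem2 (sub_nonneg.mpr hl1) hl0 (by ring)
    simpa [smul_eq_mul, show (1 - l) * t + l * (t + k) = t + h by rw [← hlk]; ring] using this
  have c2 : Lg (t - h) ≤ (1 - l) * Lg t + l * Lg (t - k) := by
    have := Lg_convex.2 mem1 mem3 (sub_nonneg.mpr hl1) hl0 (by ring)
    simpa [smul_eq_mul, show (1 - l) * t + l * (t - k) = t - h by rw [← hlk]; ring] using this
  have b1 : Lg (t + k) - Lg t ≤ k * Real.log (t + k) := Lg_add_nat_le k t ht
  have b2 : (k:ℝ) * Real.log (t - k) ≤ Lg t - Lg (t - k) := by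
    have := Lg_add_nat_ge k (t - k) (by linarith)
    simpa using this
  have key : Lg (t + h) + Lg (t - h) - 2 * Lg t ≤
      l * ((Lg (t + k) - Lg t) - (Lg t - Lg (t - k))) := by nlinarith
  calc Lg (t + h) + Lg (t - h) - 2 * Lg t
      ≤ l * ((Lg (t + k) - Lg t) - (Lg t - Lg (t - k))) := key
    _ ≤ l * (k * Real.log (t + k) - k * Real.log (t - k)) := by
        apply mul_le_mul_of_nonneg_left (by linarith) hl0
    _ = h * (Real.log (t + k) - Real.log (t - k)) := by rw [← hlk]; ring

lemma per_nat {g : ℝ → ℝ} (hper : ∀ x : ℝ, 0 < x → g (x + 1) = g x) :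
    ∀ (n : ℕ) (x : ℝ), 0 < x → g (x + n) = g x := by
  intro n
  induction n with
  | zero => intro x hx; simp
  | succ n ih =>
    intro x hx
    have h1 : x + ((n:ℝ) + 1) = (x + 1) + n := by ring
    have := ih (x + 1) (by linarith)
    push_cast
    rw [h1, this, hper x hx]

lemma red_lemma {g : ℝ → ℝ} (hper : ∀ x : ℝ, 0 < x → g (x + 1) = g x) :
    ∀ y : ℝ, 0 < y → ∃ z, z ∈ Ico (1:ℝ) 2 ∧ g y = g z := by
  intro y hy
  refine ⟨Int.fract y + 1, ⟨by linarith [Int.fract_nonneg y], by linarith [Int.fract_lt_one y]⟩, ?_⟩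
  have hfl : (0:ℤ) ≤ ⌊y⌋ := Int.le_floor.mpr (by exact_mod_cast hy.le)
  have hz : 0 < Int.fract y + 1 := by linarith [Int.fract_nonneg y]
  have key : g (Int.fract y + 1 + (⌊y⌋.toNat : ℕ)) = g (Int.fract y + 1) :=
    per_nat hper ⌊y⌋.toNat _ hz
  have hcast : (⌊y⌋.toNat : ℝ) = (⌊y⌋ : ℝ) := by
    exact_mod_cast congrArg (Int.cast : ℤ → ℝ) (Int.toNat_of_nonneg hfl)
  have hyy : Int.fract y + 1 + (⌊y⌋.toNat : ℕ) = y + 1 := by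
    rw [hcast]; rw [Int.fract]; ring
  rw [← hper y hy, ← hyy, key]

lemma const_of_periodic_midpoint_convex {g : ℝ → ℝ} (hgc : ContinuousOn g (Ioi 0))
    (hper : ∀ x : ℝ, 0 < x → g (x + 1) = g x)
    (hmid : ∀ x : ℝ, 0 < x → ∀ y : ℝ, 0 < y → g ((x + y) / 2) ≤ (g x + g y) / 2) :
    ∃ c, ∀ y : ℝ, 0 < y → g y = c := by
  have hsub : Icc (1:ℝ) 2 ⊆ Ioi 0 := fun z hz => lt_of_lt_of_le one_pos hz.1
  obtain ⟨x₀, hx₀ : x₀ ∈ Icc (1:ℝ) 2, hmax⟩ :=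
    isCompact_Icc.exists_isMaxOn (nonempty_Icc.mpr (by norm_num)) (hgc.mono hsub)
  have hx₀pos : 0 < x₀ := lt_of_lt_of_le one_pos hx₀.1
  have hglob : ∀ y : ℝ, 0 < y → g y ≤ g x₀ := by
    intro y hy
    obtain ⟨z, hz, hgz⟩ := red_lemma hper y hy
    rw [hgz]
    exact hmax (Ico_subset_Icc_self hz)
  have hloc : ∀ y : ℝ, 0 < y → y < 2 * x₀ → g y = g x₀ := by
    intro y hy hy2
    have hy' : 0 < 2 * x₀ - y := by linarith
    have h1 := hmid y hy (2 * x₀ - y) hy'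
    have h2 := hglob (2 * x₀ - y) hy'
    have h3 := hglob y hy
    have : (y + (2 * x₀ - y)) / 2 = x₀ := by ring
    rw [this] at h1
    linarith
  refine ⟨g x₀, fun y hy => ?_⟩
  obtain ⟨z, hz, hgz⟩ := red_lemma hper y hy
  rw [hgz]
  exact hloc z (lt_of_lt_of_le one_pos hz.1) (by linarith [hz.2, hx₀.1])

lemma step_eq (f : ℝ → ℝ) (hcont : ContinuousOn f (Set.Ioi (0:ℝ)))
    (hint : ∀ x : ℝ, 0 < x →
      (∫ t in x..(x + 1), f t) = (1 / 2) * Real.log (2 * Real.pi) + x * Real.log x - x) :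
    ∀ x : ℝ, 0 < x → f (x + 1) = f x + Real.log x := by
  intro x hx
  set c : ℝ := x / 2 with hc
  have hc0 : 0 < c := by positivity
  have hii : ∀ y : ℝ, 0 < y → IntervalIntegrable f MeasureTheory.volume c y := by
    intro y hy
    apply ContinuousOn.intervalIntegrable
    apply hcont.mono
    intro z hz
    rcases Set.mem_uIcc.mp hz with h | h
    · exact lt_of_lt_of_le hc0 h.1
    · exact lt_of_lt_of_le hy h.1
  have hmeas := hcont.stronglyMeasurableAtFilter isOpen_Ioi (μ := MeasureTheory.volume)
  have hca : ∀ y : ℝ, 0 < y → ContinuousAt f y := fun y hy =>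
    hcont.continuousAt (Ioi_mem_nhds hy)
  set G : ℝ → ℝ := fun y => ∫ t in c..y, f t with hG
  have h1 : HasDerivAt G (f x) x :=
    integral_hasDerivAt_right (hii x hx) (hmeas x (mem_Ioi.mpr hx)) (hca x hx)
  have h2 : HasDerivAt G (f (x + 1)) (x + 1) :=
    integral_hasDerivAt_right (hii (x+1) (by linarith)) (hmeas (x+1) (mem_Ioi.mpr (by linarith))) (hca (x+1) (by linarith))
  have h2' : HasDerivAt (fun y => G (y + 1)) (f (x + 1)) x := by
    have := HasDerivAt.comp x h2 ((hasDerivAt_id x).add_const 1)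
    simpa [Function.comp_def] using this
  have hF : HasDerivAt (fun y => G (y + 1) - G y) (f (x + 1) - f x) x := h2'.sub h1
  have hEq : (fun y => G (y + 1) - G y) =ᶠ[nhds x]
      (fun y => (1 / 2) * Real.log (2 * Real.pi) + y * Real.log y - y) := by
    filter_upwards [Ioi_mem_nhds hx] with y hy
    have hy' : (0:ℝ) < y := hy
    have : G (y + 1) - G y = ∫ t in y..(y+1), f t :=
      integral_interval_sub_left (hii (y+1) (by linarith)) (hii y hy')
    rw [this, hint y hy']
  have hF' : HasDerivAt (fun y => (1 / 2) * Real.log (2 * Real.pi) + y * Real.log y - y)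
      (f (x + 1) - f x) x := hF.congr_of_eventuallyEq hEq.symm
  have hR : HasDerivAt (fun y => (1 / 2) * Real.log (2 * Real.pi) + y * Real.log y - y)
      (Real.log x) x := by
    have hm : HasDerivAt (fun y : ℝ => y * Real.log y) (1 * Real.log x + x * x⁻¹) x :=
      (hasDerivAt_id x).mul (Real.hasDerivAt_log hx.ne')
    have := ((hm.const_add ((1 / 2) * Real.log (2 * Real.pi))).sub (hasDerivAt_id x))
    rw [mul_inv_cancel₀ hx.ne', one_mul, add_sub_cancel_right] at this
    exact this
  have := hF'.unique hR
  linarith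

lemma mid_convex {f : ℝ → ℝ} {a : ℝ} (hfc : ConvexOn ℝ (Ici a) f)
    (hper : ∀ x : ℝ, 0 < x → f (x + 1) - Lg (x + 1) = f x - Lg x) :
    ∀ x : ℝ, 0 < x → ∀ y : ℝ, 0 < y →
      f ((x + y)/2) - Lg ((x + y)/2) ≤ ((f x - Lg x) + (f y - Lg y))/2 := by
  set g : ℝ → ℝ := fun x => f x - Lg x with hg
  have hper' : ∀ x : ℝ, 0 < x → g (x + 1) = g x := hper
  suffices aux : ∀ x y : ℝ, 0 < x → 0 < y → x < y → g ((x + y)/2) ≤ (g x + g y)/2 by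
    intro x hx y hy
    rcases lt_trichotomy x y with h | h | h
    · exact aux x y hx hy h
    · subst h; show g ((x+x)/2) ≤ (g x + g x)/2
      rw [show (x+x)/2 = x by ring, show (g x + g x)/2 = g x by ring]
    · have := aux y x hy hx h
      rw [show (y+x)/2 = (x+y)/2 by ring] at this
      linarith
  intro x y hx hy hxy
  set m : ℝ := (x + y)/2 with hm
  set h : ℝ := (y - x)/2 with hh
  have hh0 : 0 < h := by rw [hh]; linarith
  set k : ℕ := ⌈h⌉₊ with hk
  have hhk : h ≤ k := Nat.le_ceil h
  have hmpos : 0 < m := by rw [hm]; linarith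
  have ev1 : ∀ᶠ n : ℕ in atTop, a - x ≤ (n:ℝ) :=
    tendsto_natCast_atTop_atTop.eventually_ge_atTop (a - x)
  have ev2 : ∀ᶠ n : ℕ in atTop, (k:ℝ) - m + 1 ≤ (n:ℝ) :=
    tendsto_natCast_atTop_atTop.eventually_ge_atTop ((k:ℝ) - m + 1)
  have bound : ∀ᶠ n : ℕ in atTop, g m ≤ (g x + g y)/2
      + (h/2) * (Real.log (m + n + k) - Real.log (m + n - k)) := by
    filter_upwards [ev1, ev2] with n hn1 hn2
    set t : ℝ := m + n with ht
    have htk : (k:ℝ) < t := by rw [ht]; linarith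
    have htx : t - h = x + n := by rw [ht, hm, hh]; ring
    have hty : t + h = y + n := by rw [ht, hm, hh]; ring
    have hax : a ≤ x + (n:ℝ) := by linarith
    have hay : a ≤ y + (n:ℝ) := by linarith
    have hconvf : f t ≤ (1/2) * f (x + n) + (1/2) * f (y + n) := by
      have h0 := hfc.2 (mem_Ici.mpr hax) (mem_Ici.mpr hay)
        (by norm_num : (0:ℝ) ≤ 1/2) (by norm_num : (0:ℝ) ≤ 1/2) (by norm_num)
      simp only [smul_eq_mul] at h0
      rw [show (1/2:ℝ) * (x + (n:ℝ)) + (1/2) * (y + (n:ℝ)) = t from by rw [ht, hm]; ring] at h0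
      exact h0
    have hsd := Lg_second_diff hh0 hhk htk
    rw [htx, hty] at hsd
    have hgm : g m = g t := (per_nat hper' n m hmpos).symm
    have hgx : g (x + n) = g x := per_nat hper' n x hx
    have hgy : g (y + n) = g y := per_nat hper' n y hy
    have e1 : g t = f t - Lg t := rfl
    have e2 : g (x + n) = f (x + n) - Lg (x + n) := rfl
    have e3 : g (y + n) = f (y + n) - Lg (y + n) := rfl
    rw [hgm]
    rw [← hgx, ← hgy]
    rw [e1, e2, e3]
    linarith
  have hd : Tendsto (fun n : ℕ => m + (n:ℝ) - k) atTop atTop := by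
    have h1 := tendsto_natCast_atTop_atTop (R := ℝ)
    have h2 := tendsto_atTop_add_const_right atTop (m - k) h1
    exact h2.congr (fun n => by ring)
  have hratio : Tendsto (fun n : ℕ => 1 + (2*(k:ℝ))/(m + n - k)) atTop (nhds 1) := by
    have := (tendsto_const_nhds (x := (2*(k:ℝ))) (f := atTop (α := ℕ))).div_atTop hd
    have := this.const_add 1
    simpa using this
  have heq : ∀ᶠ n : ℕ in atTop, Real.log (1 + (2*(k:ℝ))/(m + n - k))
      = Real.log (m + n + k) - Real.log (m + n - k) := by
    filter_upwards [hd.eventually_gt_atTop 0] with n hn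
    have hnum : (0:ℝ) < m + n + k := by
      have : (0:ℝ) ≤ (k:ℝ) := Nat.cast_nonneg k
      linarith
    rw [show 1 + (2*(k:ℝ))/(m + n - k) = (m + n + k)/(m + n - k) by field_simp; ring]
    exact Real.log_div hnum.ne' hn.ne'
  have hlog : Tendsto (fun n : ℕ => Real.log (m + n + k) - Real.log (m + n - k))
      atTop (nhds 0) := by
    have := (Real.continuousAt_log one_ne_zero).tendsto.comp hratio
    simp only [Function.comp, Real.log_one] at this
    exact this.congr' heq
  have hD : Tendsto (fun n : ℕ => (g x + g y)/2
      + (h/2) * (Real.log (m + n + k) - Real.log (m + n - k))) atTop (nhds ((g x + g y)/2)) := by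
    have := hlog.const_mul (h/2)
    have := (tendsto_const_nhds (x := (g x + g y)/2) (f := atTop (α := ℕ))).add this
    simpa using this
  exact ge_of_tendsto hD bound

lemma mid_concave {f : ℝ → ℝ} {a : ℝ} (ha : 0 < a) (hfc : ConcaveOn ℝ (Ici a) f)
    (hper : ∀ x : ℝ, 0 < x → f (x + 1) - Lg (x + 1) = f x - Lg x) :
    ∀ x : ℝ, 0 < x → ∀ y : ℝ, 0 < y →
      ((f x - Lg x) + (f y - Lg y))/2 ≤ f ((x + y)/2) - Lg ((x + y)/2) := by
  set g : ℝ → ℝ := fun x => f x - Lg x with hg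
  have hper' : ∀ x : ℝ, 0 < x → g (x + 1) = g x := hper
  intro x hx y hy
  set m : ℝ := (x + y)/2 with hm
  have hmpos : 0 < m := by rw [hm]; linarith
  set n : ℕ := ⌈a⌉₊ with hn
  have han : a ≤ (n:ℝ) := Nat.le_ceil a
  have hax : a ≤ x + (n:ℝ) := by linarith
  have hay : a ≤ y + (n:ℝ) := by linarith
  have hconcf : (1/2) * f (x + n) + (1/2) * f (y + n) ≤ f (m + n) := by
    have h0 := hfc.2 (mem_Ici.mpr hax) (mem_Ici.mpr hay)
      (by norm_num : (0:ℝ) ≤ 1/2) (by norm_num : (0:ℝ) ≤ 1/2) (by norm_num)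
    simp only [smul_eq_mul] at h0
    rw [show (1/2:ℝ) * (x + (n:ℝ)) + (1/2) * (y + (n:ℝ)) = m + n from by rw [hm]; ring] at h0
    exact h0
  have hLg : Lg (m + n) ≤ (1/2) * Lg (x + n) + (1/2) * Lg (y + n) := by
    have h0 := Lg_convex.2 (mem_Ioi.mpr (by positivity : (0:ℝ) < x + (n:ℝ)))
      (mem_Ioi.mpr (by positivity : (0:ℝ) < y + (n:ℝ)))
      (by norm_num : (0:ℝ) ≤ 1/2) (by norm_num : (0:ℝ) ≤ 1/2) (by norm_num)
    simp only [smul_eq_mul] at h0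
    rw [show (1/2:ℝ) * (x + (n:ℝ)) + (1/2) * (y + (n:ℝ)) = m + n from by rw [hm]; ring] at h0
    exact h0
  have hgm : g m = g (m + n) := (per_nat hper' n m hmpos).symm
  have hgx : g (x + n) = g x := per_nat hper' n x hx
  have hgy : g (y + n) = g y := per_nat hper' n y hy
  show (g x + g y)/2 ≤ g m
  rw [hgm, ← hgx, ← hgy]
  show (_ : ℝ) ≤ f (m + n) - Lg (m + n)
  have e2 : g (x + n) = f (x + n) - Lg (x + n) := rfl
  have e3 : g (y + n) = f (y + n) - Lg (y + n) := rfl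
  rw [e2, e3]
  linarith

lemma integral_affine (a b p q : ℝ) :
    (∫ t in a..b, (p + t * q)) = p * (b - a) + (b^2 - a^2)/2 * q := by
  rw [intervalIntegral.integral_add intervalIntegrable_const
    (intervalIntegral.intervalIntegrable_id.mul_const _)]
  rw [intervalIntegral.integral_const, intervalIntegral.integral_mul_const, integral_id]
  simp [smul_eq_mul]; ring

lemma Lg_int_upper {n : ℕ} (hn : 1 ≤ n) :
    (∫ t in (n:ℝ)..((n:ℝ)+1), Lg t) ≤ Lg n + (1/2) * Real.log n := by
  set N : ℝ := (n:ℝ) with hN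
  have hN1 : 1 ≤ N := Nat.one_le_cast.mpr hn
  have hNpos : 0 < N := by linarith
  have hsub : uIcc N (N+1) ⊆ Ioi 0 := by
    rw [uIcc_of_le (by linarith)]
    intro z hz; exact lt_of_lt_of_le hNpos hz.1
  have hLi : IntervalIntegrable Lg volume N (N+1) :=
    (Lg_contOn.mono hsub).intervalIntegrable
  have hgi : IntervalIntegrable (fun t => (Lg N - N * Real.log N) + t * Real.log N)
      volume N (N+1) :=
    (continuous_const.add (continuous_id.mul continuous_const)).intervalIntegrable _ _
  have hpt : ∀ t ∈ Icc N (N+1), Lg t ≤ (Lg N - N * Real.log N) + t * Real.log N := by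
    intro t ht
    set l : ℝ := t - N with hl
    have hl0 : 0 ≤ l := by rw [hl]; linarith [ht.1]
    have hl1 : l ≤ 1 := by rw [hl]; linarith [ht.2]
    have h0 := Lg_convex.2 (mem_Ioi.mpr hNpos) (mem_Ioi.mpr (by linarith : (0:ℝ) < N+1))
      (sub_nonneg.mpr hl1) hl0 (by ring)
    simp only [smul_eq_mul] at h0
    rw [show (1-l) * N + l * (N+1) = t from by rw [hl]; ring] at h0
    rw [Lg_rec hNpos] at h0
    have : (1-l) * Lg N + l * (Lg N + Real.log N) = (Lg N - N * Real.log N) + t * Real.log N := by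
      rw [hl]; ring
    linarith
  have hmono := intervalIntegral.integral_mono_on (by linarith : N ≤ N + 1) hLi hgi hpt
  rw [integral_affine] at hmono
  calc (∫ t in N..(N+1), Lg t) ≤ _ := hmono
    _ = Lg N + (1/2) * Real.log N := by ring

lemma Lg_int_lower {n : ℕ} (hn : 1 ≤ n) :
    Lg ((n:ℝ)+1) - (1/2) * Real.log ((n:ℝ)+1) ≤ (∫ t in (n:ℝ)..((n:ℝ)+1), Lg t) := by
  set N : ℝ := (n:ℝ) with hN
  have hN1 : 1 ≤ N := Nat.one_le_cast.mpr hn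
  have hNpos : 0 < N := by linarith
  have hsub : uIcc N (N+1) ⊆ Ioi 0 := by
    rw [uIcc_of_le (by linarith)]
    intro z hz; exact lt_of_lt_of_le hNpos hz.1
  have hLi : IntervalIntegrable Lg volume N (N+1) :=
    (Lg_contOn.mono hsub).intervalIntegrable
  have hgi : IntervalIntegrable
      (fun t => (Lg (N+1) - (N+1) * Real.log (N+1)) + t * Real.log (N+1)) volume N (N+1) :=
    (continuous_const.add (continuous_id.mul continuous_const)).intervalIntegrable _ _
  have hpt : ∀ t ∈ Icc N (N+1),
      (Lg (N+1) - (N+1) * Real.log (N+1)) + t * Real.log (N+1) ≤ Lg t := by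
    intro t ht
    rcases eq_or_lt_of_le ht.2 with heq | hlt
    · rw [heq]; ring_nf; exact le_refl _
    · have htpos : 0 < t := lt_of_lt_of_le hNpos ht.1
      have hslope := Lg_convex.slope_mono_adjacent (mem_Ioi.mpr htpos)
        (mem_Ioi.mpr (by linarith : (0:ℝ) < N + 2)) hlt (by linarith : N + 1 < N + 2)
      have hrec : Lg (N + 2) = Lg (N+1) + Real.log (N+1) := by
        rw [show N + 2 = (N+1) + 1 from by ring, Lg_rec (by linarith)]
      rw [hrec] at hslope
      have hden : (0:ℝ) < N + 1 - t := by linarith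
      rw [show Lg (N+1) + Real.log (N+1) - Lg (N+1) = Real.log (N+1) from by ring,
        show N + 2 - (N+1) = (1:ℝ) from by ring, div_one] at hslope
      rw [div_le_iff₀ hden] at hslope
      nlinarith
  have hmono := intervalIntegral.integral_mono_on (by linarith : N ≤ N + 1) hgi hLi hpt
  rw [integral_affine] at hmono
  calc Lg (N+1) - (1/2) * Real.log (N+1)
      = (Lg (N+1) - (N+1) * Real.log (N+1)) * (N + 1 - N)
        + ((N+1)^2 - N^2)/2 * Real.log (N+1) := by ring
    _ ≤ _ := hmono

lemma const_zero {c : ℝ}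
    (hA : ∀ n : ℕ, 2 ≤ n → (∫ t in (n:ℝ)..((n:ℝ)+1), Lg t)
      = (1/2) * Real.log (2 * Real.pi) + (n:ℝ) * Real.log n - n - c) : c = 0 := by
  set s : ℕ → ℝ := fun n => Real.log (Stirling.stirlingSeq n) with hs_def
  have hfact : ∀ n : ℕ, 1 ≤ n → Real.log (n.factorial : ℝ)
      = s n + (1/2) * Real.log 2 + (1/2) * Real.log n + (n:ℝ) * Real.log n - n := by
    intro n hn
    have hn0 : (n:ℝ) ≠ 0 := Nat.cast_ne_zero.mpr (by omega)
    have hf := Stirling.log_stirlingSeq_formula n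
    have h2n : Real.log (2 * (n:ℝ)) = Real.log 2 + Real.log n :=
      Real.log_mul two_ne_zero hn0
    have hne : Real.log ((n:ℝ) / Real.exp 1) = Real.log n - 1 := by
      rw [Real.log_div hn0 (Real.exp_ne_zero 1), Real.log_exp]
    rw [h2n, hne] at hf
    have : s n = Real.log (n.factorial : ℝ) - 1/2 * (Real.log 2 + Real.log n)
        - (n:ℝ) * (Real.log n - 1) := hf
    linarith [this]
  have hLgfact : ∀ n : ℕ, Lg ((n:ℝ)+1) = Real.log (n.factorial : ℝ) := by
    intro n
    unfold Lg
    rw [Real.Gamma_nat_eq_factorial]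
  have hs : Tendsto s atTop (nhds ((1/2) * Real.log Real.pi)) := by
    have h1 : Tendsto (fun n => Real.log (Stirling.stirlingSeq n)) atTop
        (nhds (Real.log (Real.sqrt Real.pi))) :=
      ((Real.continuousAt_log (Real.sqrt_pos.mpr Real.pi_pos).ne').tendsto).comp
        Stirling.tendsto_stirlingSeq_sqrt_pi
    rw [Real.log_sqrt Real.pi_pos.le] at h1
    convert h1 using 2
    ring
  have hlogr : Tendsto (fun n : ℕ => Real.log ((n:ℝ)+1) - Real.log n) atTop (nhds 0) := by
    have hd : Tendsto (fun n : ℕ => (n:ℝ)) atTop atTop := tendsto_natCast_atTop_atTop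
    have hratio : Tendsto (fun n : ℕ => 1 + 1/(n:ℝ)) atTop (nhds 1) := by
      have := (tendsto_const_nhds (x := (1:ℝ)) (f := atTop (α := ℕ))).div_atTop hd
      have := this.const_add 1
      simpa using this
    have hlog : Tendsto (fun n : ℕ => Real.log (1 + 1/(n:ℝ))) atTop (nhds 0) := by
      have := (Real.continuousAt_log one_ne_zero).tendsto.comp hratio
      simpa [Function.comp_def, Real.log_one] using this
    apply hlog.congr'
    filter_upwards [eventually_ge_atTop 1] with n hn
    have hn0 : (0:ℝ) < (n:ℝ) := Nat.cast_pos.mpr (by omega)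
    rw [show 1 + 1/(n:ℝ) = ((n:ℝ)+1)/n from by field_simp, Real.log_div (by linarith) hn0.ne']
  have hV : Tendsto (fun n : ℕ => (1/2) * Real.log (2*Real.pi) - (1/2) * Real.log 2 - s n)
      atTop (nhds 0) := by
    have := (tendsto_const_nhds
      (x := (1/2) * Real.log (2*Real.pi) - (1/2) * Real.log 2) (f := atTop (α := ℕ))).sub hs
    have hval : (1/2) * Real.log (2*Real.pi) - (1/2) * Real.log 2 - (1/2) * Real.log Real.pi
        = 0 := by
      rw [Real.log_mul two_ne_zero Real.pi_pos.ne']; ring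
    rw [hval] at this
    exact this
  have hU : Tendsto (fun n : ℕ => (1/2) * Real.log (2*Real.pi) - (1/2) * Real.log 2 - s n
      + (1/2) * (Real.log ((n:ℝ)+1) - Real.log n)) atTop (nhds 0) := by
    have := hV.add (hlogr.const_mul (1/2))
    simpa using this
  have hcV : ∀ᶠ n : ℕ in atTop,
      (1/2) * Real.log (2*Real.pi) - (1/2) * Real.log 2 - s n ≤ c := by
    filter_upwards [eventually_ge_atTop 2] with n hn
    have hn1 : 1 ≤ n := by omega
    have hNpos : (0:ℝ) < n := by exact_mod_cast Nat.lt_of_lt_of_le Nat.zero_lt_two hn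
    have hup := Lg_int_upper hn1
    rw [hA n hn] at hup
    have hLgN : Lg (n:ℝ) = Real.log (n.factorial : ℝ) - Real.log n := by
      have := Lg_rec hNpos
      rw [hLgfact n] at this
      linarith
    rw [hLgN, hfact n hn1] at hup
    linarith
  have hcU : ∀ᶠ n : ℕ in atTop,
      c ≤ (1/2) * Real.log (2*Real.pi) - (1/2) * Real.log 2 - s n
        + (1/2) * (Real.log ((n:ℝ)+1) - Real.log n) := by
    filter_upwards [eventually_ge_atTop 2] with n hn
    have hn1 : 1 ≤ n := by omega
    have hlow := Lg_int_lower hn1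
    rw [hA n hn] at hlow
    rw [hLgfact n, hfact n hn1] at hlow
    linarith
  have h1 : 0 ≤ c := le_of_tendsto hV hcV
  have h2 : c ≤ 0 := ge_of_tendsto hU hcU
  linarith

theorem log_gamma_characterization_by_raabe (f : ℝ → ℝ)
    (hcont : ContinuousOn f (Set.Ioi (0:ℝ)))
    (hconv : ∃ a : ℝ, 0 < a ∧
      (ConvexOn ℝ (Set.Ici a) f ∨ ConcaveOn ℝ (Set.Ici a) f))
    (hint : ∀ x : ℝ, 0 < x →
      (∫ t in x..(x + 1), f t) = (1 / 2) * Real.log (2 * Real.pi) + x * Real.log x - x) :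
    ∀ x : ℝ, 0 < x → f x = Real.log (Real.Gamma x) := by
  obtain ⟨a, ha, hcc⟩ := hconv
  have hstep := step_eq f hcont hint
  have hper : ∀ x : ℝ, 0 < x → f (x + 1) - Lg (x + 1) = f x - Lg x := by
    intro x hx
    rw [hstep x hx, Lg_rec hx]
    ring
  have hconstg : ∃ c : ℝ, ∀ y : ℝ, 0 < y → f y - Lg y = c := by
    rcases hcc with hfc | hfc
    · exact const_of_periodic_midpoint_convex
        (hcont.sub Lg_contOn) hper (fun x hx y hy => mid_convex hfc hper x hx y hy)
    · obtain ⟨c, hc⟩ := const_of_periodic_midpoint_convex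
        (g := fun x => Lg x - f x) (Lg_contOn.sub hcont)
        (fun x hx => by have := hper x hx; linarith)
        (fun x hx y hy => by
          have := mid_concave ha hfc hper x hx y hy
          linarith)
      exact ⟨-c, fun y hy => by have := hc y hy; linarith⟩
  obtain ⟨c, hc⟩ := hconstg
  have hA : ∀ n : ℕ, 2 ≤ n → (∫ t in (n:ℝ)..((n:ℝ)+1), Lg t)
      = (1/2) * Real.log (2 * Real.pi) + (n:ℝ) * Real.log n - n - c := by
    intro n hn
    set N : ℝ := (n:ℝ) with hN
    have hNpos : (0:ℝ) < N := by
      have : (2:ℝ) ≤ N := by rw [hN]; exact_mod_cast hn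
      linarith
    have hsub : uIcc N (N+1) ⊆ Ioi 0 := by
      rw [uIcc_of_le (by linarith)]
      intro z hz; exact lt_of_lt_of_le hNpos hz.1
    have h1 : (∫ t in N..(N+1), f t) = ∫ t in N..(N+1), (Lg t + c) := by
      apply intervalIntegral.integral_congr
      intro t ht
      have := hc t (hsub ht)
      show f t = Lg t + c
      linarith
    have hLi : IntervalIntegrable Lg volume N (N+1) :=
      (Lg_contOn.mono hsub).intervalIntegrable
    have h2 : (∫ t in N..(N+1), (Lg t + c)) = (∫ t in N..(N+1), Lg t) + c := by
      rw [intervalIntegral.integral_add hLi intervalIntegrable_const,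
        intervalIntegral.integral_const]
      simp [smul_eq_mul]
    have h3 := hint N hNpos
    rw [h1, h2] at h3
    linarith
  have hc0 : c = 0 := const_zero hA
  intro x hx
  have := hc x hx
  rw [hc0] at this
  have : f x = Lg x := by linarith
  rw [this]
  rfl
end

section
/- All monotone functions f : (0,∞) → ℝ satisfying f(x+1) − f(x) = 1/x for all x > 0 are of the form f(x) = c + ψ(x) for some real constant c. -/
open Real Set

/-- The digamma function, the derivative of `log ∘ Γ`. -/
noncomputable def digamma : ℝ → ℝ := deriv (fun x => Real.log (Real.Gamma x))

lemma diffAt_logGamma {x : ℝ} (hx : 0 < x) :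
    DifferentiableAt ℝ (fun y => Real.log (Real.Gamma y)) x := by
  have hG : DifferentiableAt ℝ Real.Gamma x := by
    refine Real.differentiableAt_Gamma (fun m => ?_)
    have : (0:ℝ) ≤ m := Nat.cast_nonneg m
    intro he; rw [he] at hx; linarith
  exact (Real.differentiableAt_log (Real.Gamma_pos_of_pos hx).ne').comp x hG

lemma hasDerivAt_logGamma {x : ℝ} (hx : 0 < x) :
    HasDerivAt (fun y => Real.log (Real.Gamma y)) (digamma x) x :=
  (diffAt_logGamma hx).hasDerivAt

lemma digamma_rec {x : ℝ} (hx : 0 < x) : digamma (x + 1) = digamma x + 1 / x := by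
  have h1 : HasDerivAt (fun y => Real.log (Real.Gamma (y + 1))) (digamma (x + 1)) x := by
    have := (hasDerivAt_logGamma (by linarith : (0:ℝ) < x + 1)).comp x
      ((hasDerivAt_id x).add_const 1)
    simpa [Function.comp_def] using this
  have h2 : HasDerivAt (fun y => Real.log y + Real.log (Real.Gamma y))
      (1 / x + digamma x) x := by
    have := (Real.hasDerivAt_log hx.ne').add (hasDerivAt_logGamma hx)
    simpa [one_div, Pi.add_def] using this
  have hev : (fun y => Real.log (Real.Gamma (y + 1)))
      =ᶠ[nhds x] (fun y => Real.log y + Real.log (Real.Gamma y)) := by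
    filter_upwards [Ioi_mem_nhds hx] with y hy
    have hy' : (0:ℝ) < y := hy
    rw [Real.Gamma_add_one hy'.ne', Real.log_mul hy'.ne' (Real.Gamma_pos_of_pos hy').ne']
  have h2' : HasDerivAt (fun y => Real.log (Real.Gamma (y + 1))) (1 / x + digamma x) x :=
    h2.congr_of_eventuallyEq hev
  have := h1.unique h2'
  linarith

lemma digamma_mono : MonotoneOn digamma (Set.Ioi (0:ℝ)) := by
  have h := Real.convexOn_log_Gamma.monotoneOn_deriv
    (fun x hx => diffAt_logGamma (mem_Ioi.mp hx))
  exact h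

theorem digamma_characterization (f : ℝ → ℝ)
    (hmono : MonotoneOn f (Set.Ioi (0:ℝ)) ∨ AntitoneOn f (Set.Ioi (0:ℝ)))
    (hfe : ∀ x : ℝ, 0 < x → f (x + 1) - f x = 1 / x) :
    ∃ c : ℝ, ∀ x : ℝ, 0 < x → f x = c + digamma x := by
  -- the antitone case is impossible
  have hmono : MonotoneOn f (Set.Ioi (0:ℝ)) := by
    rcases hmono with h | h
    · exact h
    · exfalso
      have h1 := hfe 1 one_pos
      have h2 := h (Set.mem_Ioi.mpr one_pos) (by norm_num : (2:ℝ) ∈ Set.Ioi (0:ℝ))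
        (by norm_num : (1:ℝ) ≤ 2)
      norm_num at h1
      linarith
  set g : ℝ → ℝ := fun x => f x - digamma x with hg
  have gstep : ∀ x : ℝ, 0 < x → g (x + 1) = g x := by
    intro x hx
    have := hfe x hx
    have := digamma_rec hx
    simp only [hg]
    linarith
  have gper : ∀ x : ℝ, 0 < x → ∀ n : ℕ, g (x + n) = g x := by
    intro x hx n
    induction n with
    | zero => simp
    | succ n ih =>
      have : x + (n + 1 : ℕ) = (x + n) + 1 := by push_cast; ring
      rw [this, gstep (x + n) (by positivity)]
      exact ih
  -- main estimate on (0, 1]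
  have key : ∀ x : ℝ, 0 < x → x ≤ 1 → g x = g 1 := by
    intro x hx hx1
    have bound : ∀ n : ℕ, 1 ≤ n → |g x - g 1| ≤ 1 / (n : ℝ) := by
      intro n hn
      have hn' : (1:ℝ) ≤ (n : ℝ) := by exact_mod_cast hn
      have hnpos : (0:ℝ) < n := by linarith
      -- g x = g (x + n), g 1 = g n
      have e1 : g (x + n) = g x := gper x hx n
      have e2 : g ((n:ℝ)) = g 1 := by
        obtain ⟨m, rfl⟩ := Nat.exists_eq_add_of_le hn
        have : ((1 + m : ℕ) : ℝ) = 1 + (m : ℝ) := by push_cast; ring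
        rw [this, gper 1 one_pos m]
      have hf1 : f ((n:ℝ) + 1) = f n + 1 / n := by
        have := hfe n hnpos; linarith
      have hd1 : digamma ((n:ℝ) + 1) = digamma n + 1 / n := digamma_rec hnpos
      have hxn : (0:ℝ) < x + n := by linarith
      have hlo : f ((n:ℝ)) ≤ f (x + n) :=
        hmono (Set.mem_Ioi.mpr hnpos) (Set.mem_Ioi.mpr hxn) (by linarith)
      have hhi : f (x + n) ≤ f ((n:ℝ) + 1) :=
        hmono (Set.mem_Ioi.mpr hxn) (by simp only [Set.mem_Ioi]; linarith) (by linarith)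
      have dlo : digamma ((n:ℝ)) ≤ digamma (x + n) :=
        digamma_mono (Set.mem_Ioi.mpr hnpos) (Set.mem_Ioi.mpr hxn) (by linarith)
      have dhi : digamma (x + n) ≤ digamma ((n:ℝ) + 1) :=
        digamma_mono (Set.mem_Ioi.mpr hxn) (by simp only [Set.mem_Ioi]; linarith)
          (by linarith)
      have hub : g (x + n) ≤ g ((n:ℝ)) + 1 / n := by
        simp only [hg]; linarith
      have hlb : g ((n:ℝ)) - 1 / n ≤ g (x + n) := by
        simp only [hg]; linarith
      rw [e1, e2] at hub hlb
      rw [abs_le]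
      constructor <;> linarith
    have hzero : |g x - g 1| ≤ 0 := by
      refine ge_of_tendsto tendsto_one_div_atTop_nhds_zero_nat ?_
      filter_upwards [Filter.eventually_ge_atTop 1] with n hn
      exact bound n hn
    have : |g x - g 1| = 0 := le_antisymm hzero (abs_nonneg _)
    have := abs_eq_zero.mp this
    linarith
  -- extend to all x > 0 by induction
  refine ⟨g 1, ?_⟩
  have main : ∀ n : ℕ, ∀ x : ℝ, 0 < x → x ≤ n + 1 → f x = g 1 + digamma x := by
    intro n
    induction n with
    | zero =>
      intro x hx hx1
      norm_num at hx1
      have h1 := key x hx hx1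
      simp only [hg] at h1 ⊢
      linarith
    | succ n ih =>
      intro x hx hx2
      by_cases hle : x ≤ n + 1
      · exact ih x hx hle
      · push_neg at hle
        have hx1 : 0 < x - 1 := by
          have : (0:ℝ) ≤ n := Nat.cast_nonneg n
          linarith
        have hrec := hfe (x - 1) hx1
        have hd := digamma_rec hx1
        rw [sub_add_cancel] at hrec hd
        have := ih (x - 1) hx1 (by push_cast at hx2 ⊢; linarith)
        simp only [hg] at this ⊢
        linarith
  intro x hx
  obtain ⟨n, hn⟩ := exists_nat_ge x
  exact main n x hx (by linarith)
end

section
/- Let g : (0,∞) → ℝ be decreasing with g(x) → 0 as x → ∞, and suppose the series Σ_{k≥1} g(k) converges. Then for every x > 0 the series Σ_{k≥0} g(x+k) converges, and the function f(x) = Σ_{k=1}^∞ g(k) − Σ_{k=0}^∞ g(x+k) is the unique increasing solution to f(x+1) − f(x) = g(x) with f(1) = 0; moreover f(x) → Σ_{k=1}^∞ g(k) as x → ∞. -/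
open Real Set Filter

theorem summable_case_existence_uniqueness (g : ℝ → ℝ)
    (hdec : AntitoneOn g (Set.Ioi (0:ℝ)))
    (hlim : Filter.Tendsto g Filter.atTop (nhds 0))
    (hsum : Summable fun k : ℕ => g (k + 1)) :
    (∀ x : ℝ, 0 < x → Summable fun k : ℕ => g (x + k)) ∧
    (MonotoneOn (fun x => (∑' k : ℕ, g (k + 1)) - ∑' k : ℕ, g (x + k)) (Set.Ioi (0:ℝ))) ∧
    (∀ x : ℝ, 0 < x →
      ((∑' k : ℕ, g (k + 1)) - ∑' k : ℕ, g ((x + 1) + k))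
        - ((∑' k : ℕ, g (k + 1)) - ∑' k : ℕ, g (x + k)) = g x) ∧
    ((∑' k : ℕ, g (k + 1)) - ∑' k : ℕ, g ((1 : ℝ) + k) = 0) ∧
    (∀ h : ℝ → ℝ, MonotoneOn h (Set.Ioi (0:ℝ)) →
      (∀ x : ℝ, 0 < x → h (x + 1) - h x = g x) → h 1 = 0 →
      ∀ x : ℝ, 0 < x → h x = (∑' k : ℕ, g (k + 1)) - ∑' k : ℕ, g (x + k)) ∧
    Filter.Tendsto (fun x : ℝ => (∑' k : ℕ, g (k + 1)) - ∑' k : ℕ, g (x + k))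
      Filter.atTop (nhds (∑' k : ℕ, g (k + 1))) := by
  have hg0 : ∀ x : ℝ, 0 < x → 0 ≤ g x := by
    intro x hx
    refine le_of_tendsto hlim ?_
    filter_upwards [eventually_ge_atTop x] with y hy
    exact hdec (mem_Ioi.2 hx) (mem_Ioi.2 (hx.trans_le hy)) hy
  have hS : ∀ x : ℝ, 0 < x → Summable fun k : ℕ => g (x + k) := by
    intro x hx
    have h1 : Summable fun k : ℕ => g (x + ((k + 1 : ℕ) : ℝ)) := by
      refine Summable.of_nonneg_of_le (fun k => hg0 _ ?_) (fun k => ?_) hsum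
      · have : (0:ℝ) < ((k+1 : ℕ):ℝ) := by exact_mod_cast Nat.succ_pos k
        linarith
      · have hk : (0:ℝ) < ((k+1 : ℕ):ℝ) := by exact_mod_cast Nat.succ_pos k
        have := hdec (mem_Ioi.2 hk) (mem_Ioi.2 (by linarith : (0:ℝ) < x + ((k+1:ℕ):ℝ)))
          (by linarith : ((k+1:ℕ):ℝ) ≤ x + ((k+1:ℕ):ℝ))
        push_cast at this ⊢
        linarith
    exact (summable_nat_add_iff 1).1 h1
  have hFle : ∀ x y : ℝ, 0 < x → x ≤ y →
      (∑' k : ℕ, g (y + k)) ≤ ∑' k : ℕ, g (x + k) := by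
    intro x y hx hxy
    refine Summable.tsum_le_tsum (fun k => ?_) (hS y (hx.trans_le hxy)) (hS x hx)
    have hk : (0:ℝ) ≤ (k:ℝ) := Nat.cast_nonneg k
    exact hdec (mem_Ioi.2 (by linarith)) (mem_Ioi.2 (by linarith)) (by linarith)
  have hstep : ∀ x : ℝ, 0 < x →
      (∑' k : ℕ, g (x + k)) = g x + ∑' k : ℕ, g ((x + 1) + k) := by
    intro x hx
    rw [Summable.tsum_eq_zero_add (hS x hx)]
    congr 1
    · norm_num
    · refine tsum_congr fun k => ?_
      congr 1
      push_cast
      ring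
  have hstep' : ∀ x : ℝ, 0 < x →
      ((∑' k : ℕ, g (k + 1)) - ∑' k : ℕ, g ((x + 1) + k))
        - ((∑' k : ℕ, g (k + 1)) - ∑' k : ℕ, g (x + k)) = g x := by
    intro x hx
    rw [hstep x hx]; ring
  have hmono : MonotoneOn (fun x => (∑' k : ℕ, g (k + 1)) - ∑' k : ℕ, g (x + k))
      (Set.Ioi (0:ℝ)) := by
    intro x hx y hy hxy
    simp only
    have := hFle x y (mem_Ioi.1 hx) hxy
    linarith
  have h41 : (∑' k : ℕ, g (k + 1)) - ∑' k : ℕ, g ((1:ℝ) + k) = 0 := by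
    rw [sub_eq_zero]
    exact tsum_congr fun k => by rw [add_comm]
  -- limit at infinity
  have hFnat : Tendsto (fun n : ℕ => ∑' k : ℕ, g ((n:ℝ) + k)) atTop (nhds 0) := by
    have h1 : Tendsto (fun i : ℕ => ∑' k : ℕ, g (((k + i : ℕ):ℝ) + 1)) atTop (nhds 0) :=
      tendsto_sum_nat_add (fun k : ℕ => g (k + 1))
    have h2 : (fun i : ℕ => ∑' k : ℕ, g (((k + i : ℕ):ℝ) + 1))
        = fun i : ℕ => ∑' k : ℕ, g (((i + 1 : ℕ):ℝ) + k) := by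
      funext i
      refine tsum_congr fun k => ?_
      congr 1
      push_cast
      ring
    rw [h2] at h1
    exact (tendsto_add_atTop_iff_nat
      (f := fun n : ℕ => ∑' k : ℕ, g ((n:ℝ) + k)) 1).1 h1
  have hFx0 : Tendsto (fun x : ℝ => ∑' k : ℕ, g (x + k)) atTop (nhds 0) := by
    have hfloor : Tendsto (fun x : ℝ => ∑' k : ℕ, g ((⌊x⌋₊ : ℝ) + k)) atTop (nhds 0) :=
      hFnat.comp tendsto_nat_floor_atTop
    refine tendsto_of_tendsto_of_tendsto_of_le_of_le' tendsto_const_nhds hfloor ?_ ?_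
    · filter_upwards [eventually_ge_atTop (1:ℝ)] with x hx
      refine tsum_nonneg fun k => hg0 _ ?_
      have hk : (0:ℝ) ≤ (k:ℝ) := Nat.cast_nonneg k
      linarith
    · filter_upwards [eventually_ge_atTop (1:ℝ)] with x hx
      have hfl : 1 ≤ ⌊x⌋₊ := Nat.le_floor (by exact_mod_cast hx)
      have hfl' : (0:ℝ) < (⌊x⌋₊:ℝ) := by exact_mod_cast Nat.lt_of_lt_of_le Nat.zero_lt_one hfl
      exact hFle _ _ hfl' (Nat.floor_le (by linarith))
  have hlim2 : Tendsto (fun x : ℝ => (∑' k : ℕ, g (k + 1)) - ∑' k : ℕ, g (x + k))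
      atTop (nhds (∑' k : ℕ, g (k + 1))) := by
    have hc : Tendsto (fun _ : ℝ => ∑' k : ℕ, g ((k:ℝ) + 1)) atTop
        (nhds (∑' k : ℕ, g ((k:ℝ) + 1))) := tendsto_const_nhds
    have := hc.sub hFx0
    simpa using this
  -- uniqueness
  have huniq : ∀ h : ℝ → ℝ, MonotoneOn h (Set.Ioi (0:ℝ)) →
      (∀ x : ℝ, 0 < x → h (x + 1) - h x = g x) → h 1 = 0 →
      ∀ x : ℝ, 0 < x → h x = (∑' k : ℕ, g (k + 1)) - ∑' k : ℕ, g (x + k) := by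
    intro h hm hs h1 x hx
    set f : ℝ → ℝ := fun x => (∑' k : ℕ, g (k + 1)) - ∑' k : ℕ, g (x + k) with hf
    have hfmono : MonotoneOn f (Set.Ioi (0:ℝ)) := by rw [hf]; exact hmono
    have hfs : ∀ y : ℝ, 0 < y → f (y + 1) - f y = g y := fun y hy => hstep' y hy
    have key : ∀ n : ℕ, ∀ y : ℝ, 0 < y → h (y + n) - f (y + n) = h y - f y := by
      intro n
      induction n with
      | zero => intro y hy; norm_num
      | succ n ih =>
          intro y hy
          have hyn : 0 < y + (n:ℝ) := by positivity
          have e1 := hs (y + n) hyn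
          have e2 := hfs (y + n) hyn
          have e3 := ih y hy
          push_cast
          have harg : y + ((n:ℝ) + 1) = (y + (n:ℝ)) + 1 := by ring
          rw [harg]
          linarith
    have hf1 : f 1 = 0 := h41
    have hint : ∀ n : ℕ, h ((n:ℝ) + 1) = f ((n:ℝ) + 1) := by
      intro n
      have e : h (1 + (n:ℝ)) - f (1 + (n:ℝ)) = 0 := by
        rw [key n 1 one_pos, h1, hf1]; ring
      rw [add_comm] at e
      linarith
    have hint' : ∀ n : ℕ, 1 ≤ n → h (n:ℝ) = f (n:ℝ) := by
      intro n hn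
      obtain ⟨m, rfl⟩ := Nat.exists_eq_add_of_le hn
      have := hint m
      push_cast
      rw [add_comm]
      push_cast at this
      exact this
    have hbound : ∀ n : ℕ, |h x - f x| ≤ g (⌊x + ((n + 1 : ℕ):ℝ)⌋₊ : ℝ) := by
      intro n
      set y := x + ((n + 1 : ℕ) : ℝ) with hy
      have hyge : 1 ≤ y := by
        have : (1:ℝ) ≤ ((n+1:ℕ):ℝ) := by exact_mod_cast Nat.succ_le_succ (Nat.zero_le n)
        rw [hy]; linarith
      have hy0 : (0:ℝ) < y := lt_of_lt_of_le one_pos hyge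
      set m := ⌊y⌋₊ with hmdef
      have hm1 : 1 ≤ m := Nat.le_floor (by exact_mod_cast hyge)
      have hm0 : (0:ℝ) < (m:ℝ) := by exact_mod_cast Nat.lt_of_lt_of_le Nat.zero_lt_one hm1
      have hmy : (m:ℝ) ≤ y := Nat.floor_le (by linarith)
      have hym : y ≤ (m:ℝ) + 1 := (Nat.lt_floor_add_one y).le
      have e1 : h y - f y = h x - f x := key (n+1) x hx
      have hhm : h (m:ℝ) = f (m:ℝ) := hint' m hm1
      have hhm1 : h ((m:ℝ) + 1) = f ((m:ℝ) + 1) := hint m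
      have hgm : f ((m:ℝ) + 1) - f (m:ℝ) = g (m:ℝ) := hfs _ hm0
      have up : h y ≤ h ((m:ℝ) + 1) := hm (mem_Ioi.2 hy0) (mem_Ioi.2 (by linarith)) hym
      have lo : h (m:ℝ) ≤ h y := hm (mem_Ioi.2 hm0) (mem_Ioi.2 hy0) hmy
      have fup : f y ≤ f ((m:ℝ) + 1) := hfmono (mem_Ioi.2 hy0) (mem_Ioi.2 (by linarith)) hym
      have flo : f (m:ℝ) ≤ f y := hfmono (mem_Ioi.2 hm0) (mem_Ioi.2 hy0) hmy
      rw [← e1]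
      rw [abs_le]
      constructor <;> linarith
    have hgl : Tendsto (fun n : ℕ => g (⌊x + ((n + 1 : ℕ):ℝ)⌋₊ : ℝ)) atTop (nhds 0) := by
      refine hlim.comp (tendsto_natCast_atTop_atTop.comp ?_)
      refine tendsto_atTop_mono (fun n => ?_) tendsto_id
      refine Nat.le_floor ?_
      push_cast
      simp only [id]
      linarith
    have habs : |h x - f x| ≤ 0 := ge_of_tendsto hgl (Eventually.of_forall hbound)
    have hzero : h x - f x = 0 := abs_nonpos_iff.1 habs
    have : h x = f x := by linarith
    exact this
  exact ⟨hS, hmono, hstep', h41, huniq, hlim2⟩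
end

section
/- Let g : (0,∞) → ℝ be a concave function with g(x+1) − g(x) → 0 as x → ∞. Then for each x > 0 the limit f(x) = lim_{n→∞} [ −g(x) + Σ_{k=1}^{n−1} (g(k) − g(x+k)) + x·g(n) ] exists, and f is a convex solution to f(x+1) − f(x) = g(x) with f(1) = 0. Moreover, any convex solution of this difference equation differs from f by an additive constant. -/
open Real Set Filter Finset

noncomputable def kwSeq (g : ℝ → ℝ) (x : ℝ) (n : ℕ) : ℝ :=
  -g x + (∑ k ∈ Finset.Ico 1 n, (g k - g (x + k))) + x * g n

lemma kw_induction (P : ℝ → Prop) (base : ∀ x : ℝ, 0 < x → x ≤ 1 → P x)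
    (step : ∀ x : ℝ, 0 < x → P x → P (x + 1)) : ∀ x : ℝ, 0 < x → P x := by
  have H : ∀ n : ℕ, ∀ x : ℝ, 0 < x → x ≤ n + 1 → P x := by
    intro n
    induction n with
    | zero => intro x hx hx1; exact base x hx (by simpa using hx1)
    | succ n ih =>
      intro x hx hx1
      rcases le_or_gt x 1 with h1 | h1
      · exact base x hx h1
      · have h : P (x - 1) := ih (x - 1) (by linarith) (by push_cast at hx1 ⊢; linarith)
        have := step (x - 1) (by linarith) h
        simpa using this
  intro x hx
  exact H ⌈x⌉₊ x hx (le_trans (Nat.le_ceil x) (by push_cast; linarith))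

lemma kw_tele (G : ℕ → ℝ) : ∀ n : ℕ, 1 ≤ n →
    ∑ k ∈ Finset.Ico 1 n, (G k - G (k+1)) = G 1 - G n := by
  intro n
  induction n with
  | zero => omega
  | succ n ih =>
    intro _
    rcases Nat.lt_or_ge n 1 with h | h
    · interval_cases n
      · simp
    · rw [Finset.sum_Ico_succ_top h, ih h]
      ring

lemma kw_convex_slope {F : ℝ → ℝ} (hF : ConvexOn ℝ (Set.Ioi (0:ℝ)) F)
    {a b c d : ℝ} (ha : 0 < a) (hc : 0 < c) (hab : a < b) (hcd : c < d)
    (hac : a ≤ c) (hbd : b ≤ d) :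
    (F b - F a) * (d - c) ≤ (F d - F c) * (b - a) := by
  have hb : 0 < b := lt_trans ha hab
  have hd : 0 < d := lt_trans hc hcd
  have had : a < d := lt_of_lt_of_le hab hbd
  have s1 : (F b - F a) / (b - a) ≤ (F d - F a) / (d - a) :=
    hF.secant_mono (Set.mem_Ioi.2 ha) (Set.mem_Ioi.2 hb) (Set.mem_Ioi.2 hd)
      (ne_of_gt hab) (ne_of_gt had) hbd
  have s2 : (F a - F d) / (a - d) ≤ (F c - F d) / (c - d) :=
    hF.secant_mono (Set.mem_Ioi.2 hd) (Set.mem_Ioi.2 ha) (Set.mem_Ioi.2 hc)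
      (ne_of_lt had) (ne_of_lt hcd) hac
  have e1 : (F a - F d) / (a - d) = (F d - F a) / (d - a) := by
    rw [← neg_div_neg_eq, neg_sub, neg_sub]
  have e2 : (F c - F d) / (c - d) = (F d - F c) / (d - c) := by
    rw [← neg_div_neg_eq, neg_sub, neg_sub]
  rw [e1, e2] at s2
  have s : (F b - F a) / (b - a) ≤ (F d - F c) / (d - c) := le_trans s1 s2
  rw [div_le_div_iff₀ (by linarith) (by linarith)] at s
  exact s

lemma kw_concave_slope {g : ℝ → ℝ} (hconc : ConcaveOn ℝ (Set.Ioi (0:ℝ)) g)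
    {a b c d : ℝ} (ha : 0 < a) (hc : 0 < c) (hab : a < b) (hcd : c < d)
    (hac : a ≤ c) (hbd : b ≤ d) :
    (g d - g c) * (b - a) ≤ (g b - g a) * (d - c) := by
  have := kw_convex_slope hconc.neg ha hc hab hcd hac hbd
  simp only [Pi.neg_apply] at this
  nlinarith [this]

lemma kw_succ (g : ℝ → ℝ) (x : ℝ) (n : ℕ) (hn : 1 ≤ n) :
    kwSeq g x (n+1) = kwSeq g x n + (x * (g ((n:ℝ) + 1) - g n) - (g (x + n) - g n)) := by
  unfold kwSeq
  rw [Finset.sum_Ico_succ_top hn]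
  push_cast
  ring

lemma kw_step_eq (g : ℝ → ℝ) (x : ℝ) (n : ℕ) (hn : 1 ≤ n) :
    kwSeq g (x+1) n = kwSeq g x n + (g x - (g (x + n) - g n)) := by
  have tele := kw_tele (fun j : ℕ => g (x + j)) n hn
  have e1 : ∑ k ∈ Finset.Ico 1 n, (g k - g (x+1+k))
      = ∑ k ∈ Finset.Ico 1 n, ((g k - g (x+k)) + ((fun j : ℕ => g (x + j)) k - (fun j : ℕ => g (x + j)) (k+1))) := by
    apply Finset.sum_congr rfl
    intro k _
    have : (x:ℝ) + 1 + k = x + ↑(k+1) := by push_cast; ring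
    rw [this]
    ring
  have e2 : x + ((1:ℕ):ℝ) = x + 1 := by norm_num
  unfold kwSeq
  simp only at e1
  rw [e1, Finset.sum_add_distrib, tele, e2]
  ring

section KW

variable {g : ℝ → ℝ} (hconc : ConcaveOn ℝ (Set.Ioi (0:ℝ)) g)
    (hlim : Filter.Tendsto (fun x : ℝ => g (x + 1) - g x) Filter.atTop (nhds 0))

include hconc hlim

lemma kw_D_anti (x y : ℝ) (hx : 0 < x) (hxy : x ≤ y) :
    g (y + 1) - g y ≤ g (x + 1) - g x := by
  rcases eq_or_lt_of_le hxy with rfl | hxy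
  · exact le_rfl
  · have := kw_concave_slope hconc (b := x + 1) (d := y + 1) hx (lt_trans hx hxy)
      (by linarith) (by linarith) (le_of_lt hxy) (by linarith)
    nlinarith [this]

lemma kw_D_nonneg (x : ℝ) (hx : 0 < x) : 0 ≤ g (x + 1) - g x := by
  refine le_of_tendsto hlim (Filter.eventually_atTop.2 ⟨x, fun y hy => ?_⟩)
  exact kw_D_anti hconc hlim x y hx hy

lemma kw_mono (x y : ℝ) (hx : 0 < x) (hxy : x ≤ y) : g x ≤ g y := by
  rcases eq_or_lt_of_le hxy with rfl | hxy
  · exact le_rfl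
  · have key := kw_concave_slope hconc (a := x) (b := y) (c := y) (d := y + 1)
      hx (lt_trans hx hxy) hxy (by linarith) (le_of_lt hxy) (by linarith)
    have h1 : 0 ≤ g (y + 1) - g y := kw_D_nonneg hconc hlim y (lt_trans hx hxy)
    nlinarith [key, h1]

lemma kw_shift_le (m : ℕ) : ∀ y : ℝ, 0 < y → g (y + m) - g y ≤ m * (g (y + 1) - g y) := by
  induction m with
  | zero => intro y hy; simp
  | succ m ih =>
    intro y hy
    have h1 := ih y hy
    have h2 : g (y + m + 1) - g (y + m) ≤ g (y + 1) - g y := by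
      rcases Nat.eq_zero_or_pos m with rfl | hm
      · simp
      · exact kw_D_anti hconc hlim y (y + m) hy (by
          have : (0:ℝ) < m := by exact_mod_cast hm
          linarith)
    have e : (↑(m+1) : ℝ) = (m : ℝ) + 1 := by push_cast; ring
    rw [e]
    have e2 : y + ((m:ℝ) + 1) = y + m + 1 := by ring
    rw [e2]
    nlinarith [h1, h2]

lemma kw_tendsto_shift (x : ℝ) (hx : 0 < x) :
    Filter.Tendsto (fun n : ℕ => g (x + n) - g n) Filter.atTop (nhds 0) := by
  set m : ℕ := ⌈x⌉₊ with hm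
  have hxm : x ≤ m := Nat.le_ceil x
  have hDn : Filter.Tendsto (fun n : ℕ => (m : ℝ) * (g ((n:ℝ) + 1) - g n)) Filter.atTop (nhds 0) := by
    have := (hlim.comp tendsto_natCast_atTop_atTop).const_mul (m : ℝ)
    simpa using this
  refine squeeze_zero' ?_ ?_ hDn
  · filter_upwards [Filter.eventually_ge_atTop 1] with n hn
    have hn1 : (1:ℝ) ≤ (n:ℝ) := by exact_mod_cast hn
    have := kw_mono hconc hlim (n:ℝ) (x + n) (by linarith) (by linarith)
    linarith
  · filter_upwards [Filter.eventually_ge_atTop 1] with n hn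
    have hn1 : (1:ℝ) ≤ (n:ℝ) := by exact_mod_cast hn
    have h1 : g (x + n) ≤ g ((n:ℝ) + m) :=
      kw_mono hconc hlim (x + n) ((n:ℝ) + m) (by linarith) (by linarith)
    have h2 := kw_shift_le hconc hlim m (n:ℝ) (by linarith)
    linarith

lemma kw_base (x : ℝ) (hx : 0 < x) (hx1 : x ≤ 1) :
    ∃ L, Filter.Tendsto (kwSeq g x) Filter.atTop (nhds L) := by
  have hanti : Antitone (fun n : ℕ => kwSeq g x (n+2)) := by
    apply antitone_nat_of_succ_le
    intro n
    show kwSeq g x (n+1+2) ≤ kwSeq g x (n+2)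
    have e := kw_succ g x (n+2) (by omega)
    have hm : (0:ℝ) < (↑(n+2):ℝ) := by positivity
    have key := kw_concave_slope hconc (a := (↑(n+2):ℝ)) (b := x + (↑(n+2):ℝ))
      (c := (↑(n+2):ℝ)) (d := (↑(n+2):ℝ) + 1) hm hm (by linarith) (by linarith)
      le_rfl (by linarith)
    have e3 : kwSeq g x (n+1+2) = kwSeq g x (n+2+1) := by norm_num
    rw [e3, e]
    nlinarith [key]
  have hlb : ∀ n : ℕ, kwSeq g x 2 + x * ((g ((↑(n+1):ℝ) + 1) - g (↑(n+1))) - (g 2 - g 1))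
      ≤ kwSeq g x (n+2) := by
    intro n
    induction n with
    | zero => norm_num
    | succ n ih =>
      have e := kw_succ g x (n+2) (by omega)
      have hm0 : (0:ℝ) < (↑(n+1):ℝ) := by positivity
      have key := kw_concave_slope hconc (a := (↑(n+1):ℝ)) (b := (↑(n+2):ℝ))
        (c := (↑(n+2):ℝ)) (d := x + (↑(n+2):ℝ))
        hm0 (by positivity) (by push_cast; linarith) (by linarith)
        (by push_cast; linarith) (by push_cast; linarith)
      have e4 : kwSeq g x (n+1+2) = kwSeq g x (n+2+1) := by norm_num
      rw [e4, e]
      push_cast at e ih key ⊢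
      ring_nf at e ih key ⊢
      nlinarith [key, ih]
  have hbdd : BddBelow (Set.range (fun n : ℕ => kwSeq g x (n+2))) := by
    refine ⟨kwSeq g x 2 + x * (0 - (g 2 - g 1)), ?_⟩
    rintro y ⟨n, rfl⟩
    have hD : 0 ≤ g ((↑(n+1):ℝ) + 1) - g (↑(n+1)) :=
      kw_D_nonneg hconc hlim (↑(n+1):ℝ) (by positivity)
    have := hlb n
    nlinarith [this, hD]
  have h1 : Filter.Tendsto (fun n : ℕ => kwSeq g x (n+2)) Filter.atTop
      (nhds (⨅ n, kwSeq g x (n+2))) := tendsto_atTop_ciInf hanti hbdd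
  exact ⟨_, (Filter.tendsto_add_atTop_iff_nat 2).mp h1⟩

lemma kw_exists : ∀ x : ℝ, 0 < x → ∃ L, Filter.Tendsto (kwSeq g x) Filter.atTop (nhds L) := by
  apply kw_induction
  · exact fun x hx hx1 => kw_base hconc hlim x hx hx1
  · rintro x hx ⟨L, hL⟩
    refine ⟨L + (g x - 0), ?_⟩
    have h2 : Filter.Tendsto (fun n : ℕ => kwSeq g x n + (g x - (g (x + n) - g n)))
        Filter.atTop (nhds (L + (g x - 0))) :=
      hL.add (tendsto_const_nhds.sub (kw_tendsto_shift hconc hlim x hx))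
    refine h2.congr' ?_
    filter_upwards [Filter.eventually_ge_atTop 1] with n hn
    exact (kw_step_eq g x n hn).symm

end KW

theorem krull_webster (g : ℝ → ℝ)
    (hconc : ConcaveOn ℝ (Set.Ioi (0:ℝ)) g)
    (hlim : Filter.Tendsto (fun x : ℝ => g (x + 1) - g x) Filter.atTop (nhds 0)) :
    ∃ f : ℝ → ℝ,
      (∀ x : ℝ, 0 < x →
        Filter.Tendsto
          (fun n : ℕ => -g x + (∑ k ∈ Finset.Ico 1 n, (g k - g (x + k))) + x * g n)
          Filter.atTop (nhds (f x))) ∧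
      ConvexOn ℝ (Set.Ioi (0:ℝ)) f ∧
      (∀ x : ℝ, 0 < x → f (x + 1) - f x = g x) ∧
      f 1 = 0 ∧
      (∀ h : ℝ → ℝ, ConvexOn ℝ (Set.Ioi (0:ℝ)) h →
        (∀ x : ℝ, 0 < x → h (x + 1) - h x = g x) →
        ∃ c : ℝ, ∀ x : ℝ, 0 < x → h x = f x + c) := by
  classical
  set f : ℝ → ℝ := fun x => limUnder Filter.atTop (kwSeq g x) with hfdef
  have htend : ∀ x : ℝ, 0 < x → Filter.Tendsto (kwSeq g x) Filter.atTop (nhds (f x)) :=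
    fun x hx => tendsto_nhds_limUnder (kw_exists hconc hlim x hx)
  have hrec : ∀ x : ℝ, 0 < x → f (x + 1) = f x + g x := by
    intro x hx
    have h2 : Filter.Tendsto (kwSeq g (x+1)) Filter.atTop (nhds (f x + (g x - 0))) := by
      have h3 : Filter.Tendsto (fun n : ℕ => kwSeq g x n + (g x - (g (x + n) - g n)))
          Filter.atTop (nhds (f x + (g x - 0))) :=
        (htend x hx).add (tendsto_const_nhds.sub (kw_tendsto_shift hconc hlim x hx))
      refine h3.congr' ?_
      filter_upwards [Filter.eventually_ge_atTop 1] with n hn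
      exact (kw_step_eq g x n hn).symm
    have := tendsto_nhds_unique (htend (x+1) (by linarith)) h2
    rw [this]; ring
  have hf1 : f 1 = 0 := by
    have hev : ∀ᶠ n : ℕ in Filter.atTop, kwSeq g 1 n = 0 := by
      filter_upwards [Filter.eventually_ge_atTop 1] with n hn
      have tele := kw_tele (fun j : ℕ => g j) n hn
      have e1 : ∑ k ∈ Finset.Ico 1 n, (g k - g ((1:ℝ) + k))
          = ∑ k ∈ Finset.Ico 1 n, ((fun j : ℕ => g j) k - (fun j : ℕ => g j) (k+1)) := by
        apply Finset.sum_congr rfl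
        intro k _
        simp only
        congr 1
        congr 1
        push_cast
        ring
      unfold kwSeq
      rw [e1, tele]
      push_cast
      ring
    have h0 : Filter.Tendsto (kwSeq g 1) Filter.atTop (nhds 0) :=
      Filter.Tendsto.congr' (hev.mono fun n h => h.symm) tendsto_const_nhds
    exact h0.limUnder_eq
  have hconvf : ConvexOn ℝ (Set.Ioi (0:ℝ)) f := by
    refine ⟨convex_Ioi 0, ?_⟩
    intro x hx y hy a b ha hb hab
    have hx' := Set.mem_Ioi.1 hx
    have hy' := Set.mem_Ioi.1 hy
    have hz' : 0 < a * x + b * y := by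
      have := (convex_Ioi (0:ℝ)) hx hy ha hb hab
      simpa [smul_eq_mul] using this
    simp only [smul_eq_mul]
    have hR : Filter.Tendsto (fun n : ℕ => a * kwSeq g x n + b * kwSeq g y n) Filter.atTop
        (nhds (a * f x + b * f y)) := ((htend x hx').const_mul a).add ((htend y hy').const_mul b)
    refine le_of_tendsto_of_tendsto' (htend _ hz') hR ?_
    intro n
    have h0 : a * g x + b * g y ≤ g (a * x + b * y) := by
      have := hconc.2 hx hy ha hb hab
      simpa [smul_eq_mul] using this
    have hk : ∀ k ∈ Finset.Ico 1 n,
        g (k:ℝ) - g (a * x + b * y + k) ≤ a * (g k - g (x + k)) + b * (g k - g (y + k)) := by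
      intro k _
      have hxk : (x + (k:ℝ)) ∈ Set.Ioi (0:ℝ) := Set.mem_Ioi.2 (by positivity)
      have hyk : (y + (k:ℝ)) ∈ Set.Ioi (0:ℝ) := Set.mem_Ioi.2 (by positivity)
      have hcc := hconc.2 hxk hyk ha hb hab
      simp only [smul_eq_mul] at hcc
      have e : a * (x + k) + b * (y + k) = a * x + b * y + k := by
        linear_combination (k:ℝ) * hab
      rw [e] at hcc
      have e2 : a * g (k:ℝ) + b * g (k:ℝ) = g (k:ℝ) := by
        linear_combination (g (k:ℝ)) * hab
      linarith [hcc, e2]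
    have hsum := Finset.sum_le_sum hk
    rw [Finset.sum_add_distrib, ← Finset.mul_sum, ← Finset.mul_sum] at hsum
    unfold kwSeq
    nlinarith [h0, hsum]
  refine ⟨f, fun x hx => htend x hx, hconvf, fun x hx => by rw [hrec x hx]; ring, hf1, ?_⟩
  intro h hhconv hhrec
  refine ⟨h 1, ?_⟩
  have hsum : ∀ x : ℝ, 0 < x → ∀ n : ℕ, h (x + n) = h x + ∑ k ∈ Finset.range n, g (x + k) := by
    intro x hx n
    induction n with
    | zero => simp
    | succ n ih =>
      have e : x + ((n+1:ℕ):ℝ) = (x + n) + 1 := by push_cast; ring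
      have hpos : 0 < x + (n:ℝ) := by positivity
      have h2 := hhrec (x + n) hpos
      rw [e, Finset.sum_range_succ]
      linarith [ih, h2]
  have hid : ∀ x : ℝ, 0 < x → ∀ n : ℕ, 2 ≤ n →
      h x - h 1 - kwSeq g x n = h (x + n) - h n - x * g n := by
    intro x hx n hn
    have h1 := hsum x hx n
    have h2 := hsum 1 one_pos (n-1)
    have e1 : (1:ℝ) + ((n-1:ℕ):ℝ) = (n:ℝ) := by
      have hn1 : (1:ℕ) ≤ n := by omega
      push_cast [hn1]
      ring
    rw [e1] at h2
    have e2 : ∑ k ∈ Finset.range (n-1), g (1 + (k:ℝ)) = ∑ k ∈ Finset.Ico 1 n, g (k:ℝ) := by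
      rw [Finset.sum_Ico_eq_sum_range]
      apply Finset.sum_congr rfl
      intro k _
      congr 1
      push_cast
      ring
    rw [e2] at h2
    have e3 : ∑ k ∈ Finset.range n, g (x + (k:ℝ))
        = g (x + ((0:ℕ):ℝ)) + ∑ k ∈ Finset.Ico 1 n, g (x + (k:ℝ)) := by
      rw [Finset.range_eq_Ico, Finset.sum_eq_sum_Ico_succ_bot (by omega : 0 < n)]
    have e0 : x + ((0:ℕ):ℝ) = x := by norm_num
    rw [e3, e0] at h1
    have e4 : kwSeq g x n = -g x + ((∑ k ∈ Finset.Ico 1 n, g (k:ℝ))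
        - ∑ k ∈ Finset.Ico 1 n, g (x + (k:ℝ))) + x * g n := by
      unfold kwSeq
      rw [Finset.sum_sub_distrib]
    rw [e4]
    linarith [h1, h2]
  have hbase : ∀ x : ℝ, 0 < x → x ≤ 1 → h x = f x + h 1 := by
    intro x hx hx1
    have hDlim : Filter.Tendsto (fun n : ℕ => g ((n:ℝ)+2) - g ((n:ℝ)+1)) Filter.atTop (nhds 0) := by
      have h1 : Filter.Tendsto (fun n : ℕ => (n:ℝ)+1) Filter.atTop Filter.atTop :=
        tendsto_atTop_add_const_right _ 1 tendsto_natCast_atTop_atTop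
      have h2 := hlim.comp h1
      refine h2.congr fun n => ?_
      simp only [Function.comp]
      rw [show (n:ℝ)+1+1 = (n:ℝ)+2 by ring]
    have hlow : Filter.Tendsto (fun n : ℕ => x * (g ((n:ℝ)+1) - g ((n:ℝ)+2)))
        Filter.atTop (nhds 0) := by
      have h2 := (hDlim.const_mul x).neg
      simp only [neg_zero, mul_zero] at h2
      exact h2.congr fun n => by ring
    have key : Filter.Tendsto (fun n : ℕ => h x - h 1 - kwSeq g x (n+2))
        Filter.atTop (nhds 0) := by
      refine tendsto_of_tendsto_of_tendsto_of_le_of_le hlow tendsto_const_nhds ?_ ?_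
      · intro n
        have idn := hid x hx (n+2) (by omega)
        push_cast at idn
        have hm0 : (0:ℝ) < (n:ℝ)+1 := by positivity
        have key2 := kw_convex_slope hhconv (a := (n:ℝ)+1) (b := (n:ℝ)+2)
          (c := (n:ℝ)+2) (d := x + ((n:ℝ)+2))
          hm0 (by linarith) (by linarith) (by linarith) (by linarith) (by linarith)
        have hr := hhrec ((n:ℝ)+1) hm0
        rw [show (n:ℝ)+1+1 = (n:ℝ)+2 by ring] at hr
        rw [hr] at key2
        show x * (g ((n:ℝ)+1) - g ((n:ℝ)+2)) ≤ h x - h 1 - kwSeq g x (n+2)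
        nlinarith [key2, idn]
      · intro n
        have idn := hid x hx (n+2) (by omega)
        push_cast at idn
        have hm0 : (0:ℝ) < (n:ℝ)+2 := by positivity
        have key2 := kw_convex_slope hhconv (a := (n:ℝ)+2) (b := x + ((n:ℝ)+2))
          (c := (n:ℝ)+2) (d := (n:ℝ)+2+1)
          hm0 hm0 (by linarith) (by linarith) le_rfl (by linarith)
        have hr := hhrec ((n:ℝ)+2) hm0
        rw [hr] at key2
        show h x - h 1 - kwSeq g x (n+2) ≤ 0
        nlinarith [key2, idn]
    have key3 : Filter.Tendsto (fun n : ℕ => h x - h 1 - kwSeq g x (n+2))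
        Filter.atTop (nhds (h x - h 1 - f x)) :=
      tendsto_const_nhds.sub ((Filter.tendsto_add_atTop_iff_nat 2).mpr (htend x hx))
    have := tendsto_nhds_unique key3 key
    linarith
  intro x hx
  refine kw_induction (fun y => h y = f y + h 1) hbase ?_ x hx
  intro y hy hP
  have h1 := hhrec y hy
  have h2 := hrec y hy
  linarith
end
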